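/- arXiv:1611.05300 — 3 statements merged into one kernel-verified Lean document; each statement's English description precedes it below -/
import Mathlib

section
/- Let u be a sufficiently smooth solution of the α-Euler equations with Dirichlet boundary conditions on a smooth bounded domain Ω ⊂ ℝ² whose boundary has connected components Γ, Γ₁, …, Γ_N. Then for every i ∈ {1, …, N} the circulation ∫_{Γ_i} v·n^⊥ of v = u − αΔu on Γ_i is conserved in time. -/
open MeasureTheory Real Set Filter

noncomputable section

/-- Points of the plane `ℝ²`. -/
abbrev Pt : Type := ℝ × ℝ

/-- Euclidean inner product on `ℝ²`. -/
def dot2 (a b : Pt) : ℝ := a.1 * b.1 + a.2 * b.2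

/-- Scalar cross product in 2D. -/
def cross2 (a b : Pt) : ℝ := a.1 * b.2 - a.2 * b.1

/-- Square of the Euclidean norm. -/
def sqnorm2 (a : Pt) : ℝ := a.1 ^ 2 + a.2 ^ 2

/-- Euclidean norm on `ℝ²`. -/
def mag2 (a : Pt) : ℝ := Real.sqrt (sqnorm2 a)

/-- Directional (partial) derivative of a function on the plane. -/
def pd {F : Type*} [NormedAddCommGroup F] [NormedSpace ℝ F] (v : Pt) (g : Pt → F) (x : Pt) : F :=
  fderiv ℝ g x v

/-- Laplacian. -/
def lap {F : Type*} [NormedAddCommGroup F] [NormedSpace ℝ F] (g : Pt → F) (x : Pt) : F :=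
  pd (1, 0) (pd (1, 0) g) x + pd (0, 1) (pd (0, 1) g) x

/-- Divergence of a plane vector field. -/
def div2 (u : Pt → Pt) (x : Pt) : ℝ :=
  pd (1, 0) (fun y => (u y).1) x + pd (0, 1) (fun y => (u y).2) x

/-- `curl u = ∂₁u₂ - ∂₂u₁`. -/
def curl2 (u : Pt → Pt) (x : Pt) : ℝ :=
  pd (1, 0) (fun y => (u y).2) x - pd (0, 1) (fun y => (u y).1) x

/-- Gradient of a scalar function. -/
def grad2 (g : Pt → ℝ) (x : Pt) : Pt := (pd (1, 0) g x, pd (0, 1) g x)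

/-- `Σ_j w_j ∇u_j`. -/
def stretch (u w : Pt → Pt) (x : Pt) : Pt :=
  (w x).1 • grad2 (fun y => (u y).1) x + (w x).2 • grad2 (fun y => (u y).2) x

/-- `v = u - αΔu`. -/
def vfield (α : ℝ) (u : Pt → Pt) : Pt → Pt := fun x => u x - α • lap u x

/-- `L^p` norm (`p` finite) of a scalar function on `Ω`. -/
def lpNormS (p : ℝ) (Ω : Set Pt) (g : Pt → ℝ) : ℝ := (∫ x in Ω, |g x| ^ p) ^ (1 / p)

/-- `L^p` norm of a vector field on `Ω` (Euclidean pointwise norm). -/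
def lpNormV (p : ℝ) (Ω : Set Pt) (u : Pt → Pt) : ℝ := (∫ x in Ω, mag2 (u x) ^ p) ^ (1 / p)

/-- `|∇u|²` (squared Frobenius norm of the Jacobian). -/
def gradMagSq (u : Pt → Pt) (x : Pt) : ℝ := sqnorm2 (pd (1, 0) u x) + sqnorm2 (pd (0, 1) u x)

/-- `L²` norm of a vector field. -/
def l2NormV (Ω : Set Pt) (u : Pt → Pt) : ℝ := Real.sqrt (∫ x in Ω, sqnorm2 (u x))

/-- `L²` norm of the gradient, `‖∇u‖_{L²(Ω)}`. -/
def gradL2 (Ω : Set Pt) (u : Pt → Pt) : ℝ := Real.sqrt (∫ x in Ω, gradMagSq u x)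

/-- Square of the `H¹_α` norm: `‖u‖²_{L²} + α‖∇u‖²_{L²}`. -/
def h1alphaSq (α : ℝ) (Ω : Set Pt) (u : Pt → Pt) : ℝ :=
  (∫ x in Ω, sqnorm2 (u x)) + α * ∫ x in Ω, gradMagSq u x

/-- The `H¹_α` norm. -/
def h1alphaNorm (α : ℝ) (Ω : Set Pt) (u : Pt → Pt) : ℝ := Real.sqrt (h1alphaSq α Ω u)

/-- Integer Sobolev norm `W^{k,p}(Ω)`. -/
def wkpNorm (k : ℕ) (p : ℝ) (Ω : Set Pt) (u : Pt → Pt) : ℝ :=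
  ∑ n ∈ Finset.range (k + 1), lpNormS p Ω fun x => ‖iteratedFDeriv ℝ n u x‖

/-- Gagliardo seminorm (used for `0 < s < 1`). -/
def gagliardo (s p : ℝ) (Ω : Set Pt) (u : Pt → Pt) : ℝ :=
  (∫ x in Ω, ∫ y in Ω, mag2 (u x - u y) ^ p / mag2 (x - y) ^ (2 + s * p)) ^ (1 / p)

/-- Fractional Sobolev (Sobolev–Slobodeckij) norm `W^{s,p}(Ω)`, `0 < s < 1`. -/
def wspNorm (s p : ℝ) (Ω : Set Pt) (u : Pt → Pt) : ℝ := lpNormV p Ω u + gagliardo s p Ω u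

/-- Membership in `W^{k,p}(Ω)` (classically differentiable representative whose
derivatives up to order `k` are in `L^p(Ω)`). -/
def MemW (k : ℕ) (p : ℝ) (Ω : Set Pt) (u : Pt → Pt) : Prop :=
  ContDiffOn ℝ (k : ℕ∞) u Ω ∧
    ∀ n ≤ k, MemLp (fun x => ‖iteratedFDeriv ℝ n u x‖) (ENNReal.ofReal p) (volume.restrict Ω)

/-- A bounded open planar domain. -/
structure BoundedDomain : Type where
  Ω : Set Pt
  isOpen : IsOpen Ω
  bounded : Bornology.IsBounded Ω
  nonempty : Ω.Nonempty

/-- Smooth parametrizations of the connected components of the boundary of `D` :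
`γout` parametrizes the outer component `Γ` and `γ i` the inner components `Γ₁, …, Γ_N`.
This encodes the smoothness of the boundary of the (multiply connected) domain. -/
structure BoundaryCurves (D : Set Pt) (N : ℕ) : Type where
  γout : ℝ → Pt
  γ : Fin N → ℝ → Pt
  smooth_out : ContDiff ℝ (⊤ : ℕ∞) γout
  smooth : ∀ i, ContDiff ℝ (⊤ : ℕ∞) (γ i)
  periodic_out : Function.Periodic γout 1
  periodic : ∀ i, Function.Periodic (γ i) 1
  regular_out : ∀ t, deriv γout t ≠ 0
  regular : ∀ i t, deriv (γ i) t ≠ 0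
  inj_out : Set.InjOn γout (Set.Ico 0 1)
  inj : ∀ i, Set.InjOn (γ i) (Set.Ico 0 1)
  cover : frontier D = Set.range γout ∪ ⋃ i, Set.range (γ i)
  disj : ∀ i j, i ≠ j → Disjoint (Set.range (γ i)) (Set.range (γ j))
  disj_out : ∀ i, Disjoint (Set.range γout) (Set.range (γ i))

/-- Circulation `∫_Γ w·n^⊥` of `w` along a closed curve (parametrized over one period). -/
def circulation (c : ℝ → Pt) (w : Pt → Pt) : ℝ :=
  ∫ t in (0:ℝ)..1, dot2 (w (c t)) (deriv c t)

/-- Tangency to the boundary : `w·n = 0` on each boundary component. -/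
def TangentBoundary {D : Set Pt} {N : ℕ} (B : BoundaryCurves D N) (w : Pt → Pt) : Prop :=
  (∀ t, cross2 (w (B.γout t)) (deriv B.γout t) = 0) ∧
    ∀ i t, cross2 (w (B.γ i t)) (deriv (B.γ i) t) = 0

/-- The `α`-Euler equations on `D` with Dirichlet boundary conditions, with pressure `pr`:
`∂_t(u-αΔu) + u·∇(u-αΔu) + Σ_j (u-αΔu)_j ∇u_j = -∇π`, `div u = 0`, `u|_{∂D} = 0`. -/
def IsAlphaEuler (α : ℝ) (D : Set Pt) (u : ℝ → Pt → Pt) (pr : ℝ → Pt → ℝ) : Prop :=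
  (∀ t x, 0 ≤ t → x ∈ D →
      deriv (fun s => vfield α (u s) x) t + pd (u t x) (vfield α (u t)) x
          + stretch (u t) (vfield α (u t)) x
        = -grad2 (pr t) x) ∧
    (∀ t x, 0 ≤ t → x ∈ D → div2 (u t) x = 0) ∧
    ∀ t x, 0 ≤ t → x ∈ frontier D → u t x = 0

/-- The second grade fluid equations on `D` with Dirichlet boundary conditions:
`∂_t(u-αΔu) - νΔu + u·∇(u-αΔu) + Σ_j (u-αΔu)_j ∇u_j = -∇π`, `div u = 0`, `u|_{∂D} = 0`. -/
def IsSecondGrade (α ν : ℝ) (D : Set Pt) (u : ℝ → Pt → Pt) (pr : ℝ → Pt → ℝ) : Prop :=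
  (∀ t x, 0 ≤ t → x ∈ D →
      deriv (fun s => vfield α (u s) x) t - ν • lap (u t) x
          + pd (u t x) (vfield α (u t)) x + stretch (u t) (vfield α (u t)) x
        = -grad2 (pr t) x) ∧
    (∀ t x, 0 ≤ t → x ∈ D → div2 (u t) x = 0) ∧
    ∀ t x, 0 ≤ t → x ∈ frontier D → u t x = 0

/-- Classical solution of the incompressible Euler equations with the
no-penetration boundary condition. -/
def IsEuler {D : Set Pt} {N : ℕ} (B : BoundaryCurves D N) (u : ℝ → Pt → Pt)
    (pr : ℝ → Pt → ℝ) : Prop :=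
  (∀ t x, 0 ≤ t → x ∈ D →
      deriv (fun s => u s x) t + pd (u t x) (u t) x = -grad2 (pr t) x) ∧
    (∀ t x, 0 ≤ t → x ∈ D → div2 (u t) x = 0) ∧
    ∀ t, 0 ≤ t → TangentBoundary B (u t)

/-- Weak (distributional) solution of the incompressible Euler equations on `D` with
initial data `u0`; divergence-freeness and tangency to the boundary are encoded weakly. -/
def IsWeakEuler (D : Set Pt) (u : ℝ → Pt → Pt) (u0 : Pt → Pt) : Prop :=
  (∀ φ : ℝ → Pt → Pt,
      ContDiff ℝ (⊤ : ℕ∞) (fun z : ℝ × Pt => φ z.1 z.2) →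
      HasCompactSupport (fun z : ℝ × Pt => φ z.1 z.2) →
      (∀ t x, x ∉ D → φ t x = 0) →
      (∀ t x, div2 (φ t) x = 0) →
      (∫ t in Set.Ioi (0:ℝ), ∫ x in D,
          (dot2 (u t x) (deriv (fun s => φ s x) t)
            + dot2 (pd (u t x) (φ t) x) (u t x))) +
        (∫ x in D, dot2 (u0 x) (φ 0 x)) = 0) ∧
    ∀ ψ : Pt → ℝ, ContDiff ℝ (⊤ : ℕ∞) ψ → ∀ t, 0 ≤ t →
      ∫ x in D, dot2 (u t x) (grad2 ψ x) = 0

/-- `ω` is the distributional curl (vorticity) of the vector field `u` on `D`. -/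
def IsWeakCurl (D : Set Pt) (u : Pt → Pt) (ω : Pt → ℝ) : Prop :=
  ∀ ψ : Pt → ℝ, ContDiff ℝ (⊤ : ℕ∞) ψ → HasCompactSupport ψ → tsupport ψ ⊆ D →
    ∫ x in D, ω x * ψ x
      = ∫ x in D, dot2 (u x) ((pd (0,1) ψ x, -(pd (1,0) ψ x)) : Pt)

section CirculationHelpers

lemma clm_decomp {F : Type*} [NormedAddCommGroup F] [NormedSpace ℝ F]
    (L : Pt →L[ℝ] F) (v : Pt) : L v = v.1 • L (1, 0) + v.2 • L (0, 1) := by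
  have hv : v = v.1 • ((1 : ℝ), (0 : ℝ)) + v.2 • ((0 : ℝ), (1 : ℝ)) := by
    simp [Prod.ext_iff]
  calc L v = L (v.1 • ((1 : ℝ), (0 : ℝ)) + v.2 • ((0 : ℝ), (1 : ℝ))) := by rw [← hv]
    _ = v.1 • L (1, 0) + v.2 • L (0, 1) := by
        rw [map_add, L.map_smul, L.map_smul]

lemma fderiv_apply_eq_dot2 (g : Pt → ℝ) (x v : Pt) :
    fderiv ℝ g x v = dot2 (grad2 g x) v := by
  rw [clm_decomp]
  simp only [dot2, grad2, pd, smul_eq_mul]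
  ring

lemma pd_joint {F : Type*} [NormedAddCommGroup F] [NormedSpace ℝ F]
    (f : ℝ → Pt → F) (h : ContDiff ℝ (⊤ : ℕ∞) fun z : ℝ × Pt => f z.1 z.2) (w : Pt) :
    ContDiff ℝ (⊤ : ℕ∞) fun z : ℝ × Pt => pd w (f z.1) z.2 := by
  unfold pd
  have h1 : ContDiff ℝ (⊤ : ℕ∞) (Function.uncurry fun (z : ℝ × Pt) (y : Pt) => f z.1 y) :=
    h.comp ((contDiff_fst.fst).prodMk contDiff_snd)
  exact (h1.fderiv contDiff_snd (by simp)).clm_apply contDiff_const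

lemma hasDerivAt_slice {F : Type*} [NormedAddCommGroup F] [NormedSpace ℝ F]
    (W : ℝ × Pt → F) (hW : ContDiff ℝ (⊤ : ℕ∞) W) (t : ℝ) (x : Pt) :
    HasDerivAt (fun τ => W (τ, x)) (fderiv ℝ W (t, x) ((1 : ℝ), (0 : Pt))) t :=
  (hW.differentiable (by simp) (t, x)).hasFDerivAt.comp_hasDerivAt t
    ((hasDerivAt_id t).prodMk (hasDerivAt_const t x))

lemma hasDerivAt_comp_curve {F : Type*} [NormedAddCommGroup F] [NormedSpace ℝ F]
    (g : Pt → F) (γ : ℝ → Pt) (s : ℝ)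
    (hg : DifferentiableAt ℝ g (γ s)) (hγ : DifferentiableAt ℝ γ s) :
    HasDerivAt (fun s' => g (γ s')) (fderiv ℝ g (γ s) (deriv γ s)) s :=
  hg.hasFDerivAt.comp_hasDerivAt s hγ.hasDerivAt

lemma hasDerivAt_dot2_const {f : ℝ → Pt} {f' : Pt} {τ : ℝ}
    (hf : HasDerivAt f f' τ) (c : Pt) :
    HasDerivAt (fun τ => dot2 (f τ) c) (dot2 f' c) τ := by
  have h1 : HasDerivAt (fun τ => (f τ).1) f'.1 τ :=
    (ContinuousLinearMap.fst ℝ ℝ ℝ).hasFDerivAt.comp_hasDerivAt τ hf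
  have h2 : HasDerivAt (fun τ => (f τ).2) f'.2 τ :=
    (ContinuousLinearMap.snd ℝ ℝ ℝ).hasFDerivAt.comp_hasDerivAt τ hf
  exact (h1.mul_const c.1).add (h2.mul_const c.2)

lemma vfield_joint_smooth (α : ℝ) (u : ℝ → Pt → Pt)
    (h : ContDiff ℝ (⊤ : ℕ∞) fun z : ℝ × Pt => u z.1 z.2) :
    ContDiff ℝ (⊤ : ℕ∞) fun z : ℝ × Pt => vfield α (u z.1) z.2 := by
  have h10 := pd_joint u h (1, 0)
  have h01 := pd_joint u h (0, 1)
  have h20 := pd_joint (fun τ => pd ((1 : ℝ), (0 : ℝ)) (u τ)) h10 (1, 0)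
  have h02 := pd_joint (fun τ => pd ((0 : ℝ), (1 : ℝ)) (u τ)) h01 (0, 1)
  unfold vfield lap
  exact h.sub ((h20.add h02).const_smul α)

end CirculationHelpers

/-- Lemma 1: for a sufficiently smooth solution of the `α`-Euler equations
with Dirichlet boundary conditions, the circulation of `v = u - αΔu` on each inner boundary
component `Γ_i` is conserved in time. -/
theorem alphaEuler_circulation_conserved
    (D : BoundedDomain) (N : ℕ) (B : BoundaryCurves D.Ω N)
    (α : ℝ) (hα : 0 < α)
    (u : ℝ → Pt → Pt) (pr : ℝ → Pt → ℝ)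
    (husmooth : ContDiff ℝ (⊤ : ℕ∞) (fun z : ℝ × Pt => u z.1 z.2))
    (hprsmooth : ContDiff ℝ (⊤ : ℕ∞) (fun z : ℝ × Pt => pr z.1 z.2))
    (hsol : IsAlphaEuler α D.Ω u pr) :
    ∀ i : Fin N, ∀ t, 0 ≤ t →
      circulation (B.γ i) (vfield α (u t)) = circulation (B.γ i) (vfield α (u 0)) := by
  intro i t ht
  set γ : ℝ → Pt := B.γ i with hγdef
  have hγs : ContDiff ℝ (⊤ : ℕ∞) γ := B.smooth i
  have hγd : Differentiable ℝ γ := hγs.differentiable (by simp)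
  have hmem : ∀ s, γ s ∈ frontier D.Ω := by
    intro s
    rw [B.cover]
    exact Or.inr (Set.mem_iUnion.2 ⟨i, ⟨s, rfl⟩⟩)
  have hu0 : ∀ τ, 0 ≤ τ → ∀ s, u τ (γ s) = 0 := fun τ hτ s => hsol.2.2 τ (γ s) hτ (hmem s)
  have hV : ContDiff ℝ (⊤ : ℕ∞) fun z : ℝ × Pt => vfield α (u z.1) z.2 := vfield_joint_smooth α u husmooth
  have hVslice : ∀ τ : ℝ, ContDiff ℝ (⊤ : ℕ∞) (vfield α (u τ)) := fun τ =>
    hV.comp (contDiff_const.prodMk contDiff_id)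
  have huslice : ∀ τ : ℝ, ContDiff ℝ (⊤ : ℕ∞) (u τ) := fun τ =>
    husmooth.comp (contDiff_const.prodMk contDiff_id)
  have hprslice : ∀ τ : ℝ, ContDiff ℝ (⊤ : ℕ∞) (pr τ) := fun τ =>
    hprsmooth.comp (contDiff_const.prodMk contDiff_id)
  have hgradpr : ContDiff ℝ (⊤ : ℕ∞) fun z : ℝ × Pt => grad2 (pr z.1) z.2 := by
    unfold grad2
    exact (pd_joint pr hprsmooth (1, 0)).prodMk (pd_joint pr hprsmooth (0, 1))
  -- continuity of (τ, s) ↦ dot2 (grad2 (pr τ) (γ s)) (deriv γ s)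
  have hPcont : Continuous fun z : ℝ × ℝ => dot2 (grad2 (pr z.1) (γ z.2)) (deriv γ z.2) := by
    have h1 : Continuous fun z : ℝ × ℝ => grad2 (pr z.1) (γ z.2) :=
      hgradpr.continuous.comp (continuous_fst.prodMk (hγs.continuous.comp continuous_snd))
    have h2 : Continuous fun z : ℝ × ℝ => deriv γ z.2 :=
      (hγs.continuous_deriv (by simp)).comp continuous_snd
    unfold dot2
    exact (h1.fst.mul h2.fst).add (h1.snd.mul h2.snd)
  have hPder : ∀ τ s, HasDerivAt (fun s' => pr τ (γ s'))
      (dot2 (grad2 (pr τ) (γ s)) (deriv γ s)) s := by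
    intro τ s
    have h := hasDerivAt_comp_curve (pr τ) γ s
      ((hprslice τ).differentiable (by simp) (γ s)) (hγd s)
    rwa [fderiv_apply_eq_dot2] at h
  -- the key pointwise derivative identity on the boundary
  have hkey : ∀ τ, 0 ≤ τ → ∀ s,
      HasDerivAt (fun τ' => dot2 (vfield α (u τ') (γ s)) (deriv γ s))
        (-(dot2 (grad2 (pr τ) (γ s)) (deriv γ s))) τ := by
    intro τ hτ s
    have hder : HasDerivAt (fun τ' => vfield α (u τ') (γ s))
        (fderiv ℝ (fun z : ℝ × Pt => vfield α (u z.1) z.2) (τ, γ s) ((1 : ℝ), (0 : Pt))) τ :=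
      hasDerivAt_slice _ hV τ (γ s)
    -- the PDE extends to the closure of D.Ω, in particular to the boundary point γ s
    have hext : deriv (fun τ' => vfield α (u τ') (γ s)) τ
        + pd (u τ (γ s)) (vfield α (u τ)) (γ s)
        + stretch (u τ) (vfield α (u τ)) (γ s) + grad2 (pr τ) (γ s) = 0 := by
      have c1 : Continuous fun y : Pt => deriv (fun τ' => vfield α (u τ') y) τ := by
        have he : (fun y : Pt => deriv (fun τ' => vfield α (u τ') y) τ)
            = fun y => fderiv ℝ (fun z : ℝ × Pt => vfield α (u z.1) z.2) (τ, y)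
                ((1 : ℝ), (0 : Pt)) :=
          funext fun y => (hasDerivAt_slice _ hV τ y).deriv
        rw [he]
        exact ((hV.continuous_fderiv (by simp)).comp (Continuous.prodMk_right τ)).clm_apply
          continuous_const
      have c2 : Continuous fun y : Pt => pd (u τ y) (vfield α (u τ)) y := by
        unfold pd
        exact ((hVslice τ).continuous_fderiv (by simp)).clm_apply
          (husmooth.continuous.comp (Continuous.prodMk_right τ))
      have c3 : Continuous fun y : Pt => stretch (u τ) (vfield α (u τ)) y := by
        unfold stretch grad2
        have hu1 : Continuous fun y : Pt => pd ((1 : ℝ), (0 : ℝ)) (fun y' => (u τ y').1) y :=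
          (pd_joint (fun τ' y' => (u τ' y').1) husmooth.fst ((1 : ℝ), (0 : ℝ))).continuous.comp
            (Continuous.prodMk_right τ)
        have hu1' : Continuous fun y : Pt => pd ((0 : ℝ), (1 : ℝ)) (fun y' => (u τ y').1) y :=
          (pd_joint (fun τ' y' => (u τ' y').1) husmooth.fst ((0 : ℝ), (1 : ℝ))).continuous.comp
            (Continuous.prodMk_right τ)
        have hu2 : Continuous fun y : Pt => pd ((1 : ℝ), (0 : ℝ)) (fun y' => (u τ y').2) y :=
          (pd_joint (fun τ' y' => (u τ' y').2) husmooth.snd ((1 : ℝ), (0 : ℝ))).continuous.comp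
            (Continuous.prodMk_right τ)
        have hu2' : Continuous fun y : Pt => pd ((0 : ℝ), (1 : ℝ)) (fun y' => (u τ y').2) y :=
          (pd_joint (fun τ' y' => (u τ' y').2) husmooth.snd ((0 : ℝ), (1 : ℝ))).continuous.comp
            (Continuous.prodMk_right τ)
        have hvc : Continuous fun y : Pt => vfield α (u τ) y := (hVslice τ).continuous
        exact (hvc.fst.smul (hu1.prodMk hu1')).add (hvc.snd.smul (hu2.prodMk hu2'))
      have c4 : Continuous fun y : Pt => grad2 (pr τ) y :=
        hgradpr.continuous.comp (Continuous.prodMk_right τ)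
      have hEq : Set.EqOn
          (fun y : Pt => deriv (fun τ' => vfield α (u τ') y) τ
            + pd (u τ y) (vfield α (u τ)) y
            + stretch (u τ) (vfield α (u τ)) y + grad2 (pr τ) y)
          (fun _ => (0 : Pt)) D.Ω := by
        intro y hy
        have h := hsol.1 τ y hτ hy
        simp only
        rw [h]
        exact neg_add_cancel _
      have hEq' := hEq.closure (((c1.add c2).add c3).add c4) continuous_const
      exact hEq' (frontier_subset_closure (hmem s))
    -- the transport term vanishes on the boundary
    have hpd0 : pd (u τ (γ s)) (vfield α (u τ)) (γ s) = 0 := by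
      unfold pd
      rw [hu0 τ hτ s]
      exact ContinuousLinearMap.map_zero _
    -- the stretching term is tangent to nothing: its dot product with γ' vanishes
    have hg1 : dot2 (grad2 (fun y => (u τ y).1) (γ s)) (deriv γ s) = 0 := by
      have hdiff : DifferentiableAt ℝ (fun y => (u τ y).1) (γ s) :=
        ((huslice τ).fst.differentiable (by simp)) (γ s)
      have h1 := hasDerivAt_comp_curve (fun y => (u τ y).1) γ s hdiff (hγd s)
      have h0 : HasDerivAt (fun s' => (fun y => (u τ y).1) (γ s')) 0 s := by
        have he : (fun s' => (fun y => (u τ y).1) (γ s')) = fun _ => (0 : ℝ) :=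
          funext fun s' => by simp [hu0 τ hτ s']
        rw [he]; exact hasDerivAt_const s 0
      rw [← fderiv_apply_eq_dot2]
      exact (h0.unique h1).symm
    have hg2 : dot2 (grad2 (fun y => (u τ y).2) (γ s)) (deriv γ s) = 0 := by
      have hdiff : DifferentiableAt ℝ (fun y => (u τ y).2) (γ s) :=
        ((huslice τ).snd.differentiable (by simp)) (γ s)
      have h1 := hasDerivAt_comp_curve (fun y => (u τ y).2) γ s hdiff (hγd s)
      have h0 : HasDerivAt (fun s' => (fun y => (u τ y).2) (γ s')) 0 s := by
        have he : (fun s' => (fun y => (u τ y).2) (γ s')) = fun _ => (0 : ℝ) :=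
          funext fun s' => by simp [hu0 τ hτ s']
        rw [he]; exact hasDerivAt_const s 0
      rw [← fderiv_apply_eq_dot2]
      exact (h0.unique h1).symm
    have hstretch0 : dot2 (stretch (u τ) (vfield α (u τ)) (γ s)) (deriv γ s) = 0 := by
      unfold stretch
      have expand : ∀ (a b : ℝ) (P Q c : Pt),
          dot2 (a • P + b • Q) c = a * dot2 P c + b * dot2 Q c := by
        intro a b P Q c
        simp [dot2]
        ring
      rw [expand, hg1, hg2]
      ring
    -- compute the derivative value
    have hA : deriv (fun τ' => vfield α (u τ') (γ s)) τ
        = -grad2 (pr τ) (γ s) - stretch (u τ) (vfield α (u τ)) (γ s) := by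
      have h := hext
      rw [hpd0, add_zero] at h
      have h2 : deriv (fun τ' => vfield α (u τ') (γ s)) τ
          + stretch (u τ) (vfield α (u τ)) (γ s) = -grad2 (pr τ) (γ s) :=
        eq_neg_of_add_eq_zero_left h
      exact eq_sub_of_add_eq h2
    have hgoal : dot2 (fderiv ℝ (fun z : ℝ × Pt => vfield α (u z.1) z.2) (τ, γ s)
          ((1 : ℝ), (0 : Pt))) (deriv γ s)
        = -(dot2 (grad2 (pr τ) (γ s)) (deriv γ s)) := by
      rw [← hder.deriv, hA]
      have expand2 : ∀ (P Q c : Pt), dot2 (-P - Q) c = -(dot2 P c) - dot2 Q c := by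
        intro P Q c
        simp [dot2]
        ring
      rw [expand2, hstretch0, sub_zero]
    have hd := hasDerivAt_dot2_const hder (deriv γ s)
    rw [hgoal] at hd
    exact hd
  -- continuity of the circulation integrand
  have hVcont : Continuous fun z : ℝ × ℝ => dot2 (vfield α (u z.1) (γ z.2)) (deriv γ z.2) := by
    have h1 : Continuous fun z : ℝ × ℝ => vfield α (u z.1) (γ z.2) :=
      hV.continuous.comp (continuous_fst.prodMk (hγs.continuous.comp continuous_snd))
    have h2 : Continuous fun z : ℝ × ℝ => deriv γ z.2 :=
      (hγs.continuous_deriv (by simp)).comp continuous_snd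
    unfold dot2
    exact (h1.fst.mul h2.fst).add (h1.snd.mul h2.snd)
  -- fundamental theorem of calculus in time
  have hFTC : ∀ s : ℝ, dot2 (vfield α (u t) (γ s)) (deriv γ s)
      - dot2 (vfield α (u 0) (γ s)) (deriv γ s)
      = ∫ τ in (0:ℝ)..t, -(dot2 (grad2 (pr τ) (γ s)) (deriv γ s)) := by
    intro s
    refine (intervalIntegral.integral_eq_sub_of_hasDerivAt
      (f := fun τ => dot2 (vfield α (u τ) (γ s)) (deriv γ s))
      (f' := fun τ => -(dot2 (grad2 (pr τ) (γ s)) (deriv γ s))) (fun τ hτ => ?_) ?_).symm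
    · have hτ0 : 0 ≤ τ := by
        rw [Set.uIcc_of_le ht] at hτ
        exact hτ.1
      exact hkey τ hτ0 s
    · exact ((hPcont.comp (continuous_id.prodMk continuous_const)).neg).intervalIntegrable 0 t
  have hIInt : ∀ τ : ℝ, IntervalIntegrable
      (fun s => dot2 (vfield α (u τ) (γ s)) (deriv γ s)) volume 0 1 := fun τ =>
    (hVcont.comp (continuous_const.prodMk continuous_id)).intervalIntegrable 0 1
  have hsplit : circulation γ (vfield α (u t)) - circulation γ (vfield α (u 0))
      = ∫ s in (0:ℝ)..1, (dot2 (vfield α (u t) (γ s)) (deriv γ s)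
          - dot2 (vfield α (u 0) (γ s)) (deriv γ s)) := by
    unfold circulation
    rw [intervalIntegral.integral_sub (hIInt t) (hIInt 0)]
  have h2 : (∫ s in (0:ℝ)..1, (dot2 (vfield α (u t) (γ s)) (deriv γ s)
        - dot2 (vfield α (u 0) (γ s)) (deriv γ s)))
      = ∫ s in (0:ℝ)..1, ∫ τ in (0:ℝ)..t, -(dot2 (grad2 (pr τ) (γ s)) (deriv γ s)) :=
    intervalIntegral.integral_congr fun s _ => hFTC s
  -- Fubini
  have hswap : (∫ s in (0:ℝ)..1, ∫ τ in (0:ℝ)..t, -(dot2 (grad2 (pr τ) (γ s)) (deriv γ s)))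
      = ∫ τ in (0:ℝ)..t, ∫ s in (0:ℝ)..1, -(dot2 (grad2 (pr τ) (γ s)) (deriv γ s)) := by
    have hcont : Continuous fun z : ℝ × ℝ => -(dot2 (grad2 (pr z.2) (γ z.1)) (deriv γ z.1)) :=
      (hPcont.comp (continuous_snd.prodMk continuous_fst)).neg
    have hint : MeasureTheory.Integrable
        (Function.uncurry fun s τ : ℝ => -(dot2 (grad2 (pr τ) (γ s)) (deriv γ s)))
        ((volume.restrict (Set.Ioc (0:ℝ) 1)).prod (volume.restrict (Set.Ioc (0:ℝ) t))) := by
      rw [MeasureTheory.Measure.prod_restrict]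
      exact (hcont.continuousOn.integrableOn_compact (isCompact_Icc.prod isCompact_Icc)).mono_set
        (Set.prod_mono Set.Ioc_subset_Icc_self Set.Ioc_subset_Icc_self)
    rw [intervalIntegral.integral_of_le (zero_le_one), intervalIntegral.integral_of_le ht]
    simp_rw [intervalIntegral.integral_of_le ht, intervalIntegral.integral_of_le zero_le_one]
    exact MeasureTheory.integral_integral_swap hint
  have hinner : ∀ τ : ℝ, (∫ s in (0:ℝ)..1, -(dot2 (grad2 (pr τ) (γ s)) (deriv γ s))) = 0 := by
    intro τ
    rw [intervalIntegral.integral_neg]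
    have hFTC2 : (∫ s in (0:ℝ)..1, dot2 (grad2 (pr τ) (γ s)) (deriv γ s))
        = pr τ (γ 1) - pr τ (γ 0) :=
      intervalIntegral.integral_eq_sub_of_hasDerivAt (fun s _ => hPder τ s)
        ((hPcont.comp (continuous_const.prodMk continuous_id)).intervalIntegrable 0 1)
    rw [hFTC2]
    have hper : γ 1 = γ 0 := by simpa using B.periodic i 0
    rw [hper]
    ring
  have hzero : circulation γ (vfield α (u t)) - circulation γ (vfield α (u 0)) = 0 := by
    rw [hsplit, h2, hswap]
    rw [intervalIntegral.integral_congr fun τ (_ : τ ∈ Set.uIcc (0:ℝ) t) => hinner τ]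
    simp
  linarith [hzero]
end
end

section
/- Let u be a sufficiently smooth solution of the second grade fluid equations with Dirichlet boundary conditions on a smooth bounded domain Ω ⊂ ℝ² whose boundary has connected components Γ, Γ₁, …, Γ_N, and set v = u − αΔu. Then for every i ∈ {1, …, N} the circulation γ_i(t) = ∫_{Γ_i} v(t)·n^⊥ satisfies γ_i(t) = γ_i(0) e^{−νt/α}. -/
open MeasureTheory Real Set Filter

noncomputable section

/-! ### Auxiliary machinery: joint derivatives of slices -/

section Aux

variable {F : Type*} [NormedAddCommGroup F] [NormedSpace ℝ F]

/-- Joint directional derivative. -/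
def dsl (e : ℝ × Pt) (U : ℝ × Pt → F) : ℝ × Pt → F := fun z => fderiv ℝ U z e

lemma contDiff_dsl (e : ℝ × Pt) {U : ℝ × Pt → F} (hU : ContDiff ℝ (⊤ : ℕ∞) U) :
    ContDiff ℝ (⊤ : ℕ∞) (dsl e U) := (hU.fderiv_right (by simp)).clm_apply contDiff_const

lemma pd_slice {U : ℝ × Pt → F} (hU : ContDiff ℝ (⊤ : ℕ∞) U) (t : ℝ) (x e : Pt) :
    pd e (fun y => U (t, y)) x = fderiv ℝ U (t, x) (0, e) := by
  have h1 : HasFDerivAt (fun y : Pt => ((t, y) : ℝ × Pt))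
      (((0 : Pt →L[ℝ] ℝ)).prod (ContinuousLinearMap.id ℝ Pt)) x :=
    HasFDerivAt.prodMk (hasFDerivAt_const t x) (hasFDerivAt_id x)
  have h2 := (hU.differentiable (by simp) (t, x)).hasFDerivAt
  have h4 : HasFDerivAt (fun y => U (t, y))
      ((fderiv ℝ U (t, x)).comp (((0 : Pt →L[ℝ] ℝ)).prod (ContinuousLinearMap.id ℝ Pt))) x :=
    h2.comp x h1
  rw [pd, h4.fderiv]
  rfl

lemma hasDerivAt_time {U : ℝ × Pt → F} (hU : ContDiff ℝ (⊤ : ℕ∞) U) (t : ℝ) (x : Pt) :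
    HasDerivAt (fun s => U (s, x)) (fderiv ℝ U (t, x) (1, 0)) t := by
  have h1 : HasDerivAt (fun s : ℝ => ((s, x) : ℝ × Pt)) ((1 : ℝ), (0 : Pt)) t :=
    HasDerivAt.prodMk (hasDerivAt_id t) (hasDerivAt_const t x)
  exact (hU.differentiable (by simp) (t, x)).hasFDerivAt.comp_hasDerivAt t h1

lemma deriv_along {g : ℝ × Pt → F} (hg : ContDiff ℝ (⊤ : ℕ∞) g) {c : ℝ → Pt} (hc : ContDiff ℝ (⊤ : ℕ∞) c)
    (t s : ℝ) :
    deriv (fun σ => g (t, c σ)) s = fderiv ℝ g (t, c s) (0, deriv c s) := by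
  have h1 : HasDerivAt (fun σ : ℝ => ((t, c σ) : ℝ × Pt)) ((0 : ℝ), deriv c s) s :=
    HasDerivAt.prodMk (hasDerivAt_const s t) ((hc.differentiable (by simp) s).hasDerivAt)
  exact ((hg.differentiable (by simp) (t, c s)).hasFDerivAt.comp_hasDerivAt s h1).deriv

/-- Joint Laplacian of the space-slices. -/
def lapJ (U : ℝ × Pt → F) : ℝ × Pt → F := fun z =>
  dsl (0, (1, 0)) (dsl (0, (1, 0)) U) z + dsl (0, (0, 1)) (dsl (0, (0, 1)) U) z

lemma contDiff_lapJ {U : ℝ × Pt → F} (hU : ContDiff ℝ (⊤ : ℕ∞) U) : ContDiff ℝ (⊤ : ℕ∞) (lapJ U) :=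
  (contDiff_dsl _ (contDiff_dsl _ hU)).add (contDiff_dsl _ (contDiff_dsl _ hU))

lemma lap_slice {U : ℝ × Pt → F} (hU : ContDiff ℝ (⊤ : ℕ∞) U) (t : ℝ) (x : Pt) :
    lap (fun y => U (t, y)) x = lapJ U (t, x) := by
  have key : ∀ e : Pt, pd e (pd e (fun y => U (t, y))) x
      = dsl ((0 : ℝ), e) (dsl ((0 : ℝ), e) U) (t, x) := by
    intro e
    have h1 : pd e (fun y => U (t, y)) = fun y => dsl ((0 : ℝ), e) U (t, y) :=
      funext fun y => pd_slice hU t y e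
    rw [show pd e (pd e (fun y => U (t, y))) x
        = pd e (fun y => dsl ((0 : ℝ), e) U (t, y)) x from by rw [h1]]
    exact pd_slice (contDiff_dsl _ hU) t x e
  unfold lap lapJ
  rw [key (1, 0), key (0, 1)]

end Aux

section Aux2

lemma dot2_fderiv (f : ℝ × Pt → ℝ) (z : ℝ × Pt) (k : Pt) :
    dot2 ((fderiv ℝ f z (0, (1, 0)), fderiv ℝ f z (0, (0, 1))) : Pt) k
      = fderiv ℝ f z ((0 : ℝ), k) := by
  have h : ((0 : ℝ), k) = k.1 • (((0 : ℝ), ((1 : ℝ), (0 : ℝ))) : ℝ × Pt)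
      + k.2 • (((0 : ℝ), ((0 : ℝ), (1 : ℝ))) : ℝ × Pt) := by
    apply Prod.ext <;> simp [Prod.ext_iff]
  rw [h, map_add, _root_.map_smul, _root_.map_smul, dot2]
  simp [smul_eq_mul]
  ring

lemma continuous_dot2 {X : Type*} [TopologicalSpace X] {f g : X → Pt} (hf : Continuous f) (hg : Continuous g) :
    Continuous fun s => dot2 (f s) (g s) := by
  unfold dot2
  exact ((continuous_fst.comp hf).mul (continuous_fst.comp hg)).add
    ((continuous_snd.comp hf).mul (continuous_snd.comp hg))

lemma dot2_add_left (a b k : Pt) : dot2 (a + b) k = dot2 a k + dot2 b k := by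
  simp [dot2]; ring

lemma dot2_neg_left (a k : Pt) : dot2 (-a) k = -dot2 a k := by
  simp [dot2]; ring

lemma dot2_sub_left (a b k : Pt) : dot2 (a - b) k = dot2 a k - dot2 b k := by
  simp [dot2]; ring

lemma dot2_smul_left (r : ℝ) (a k : Pt) : dot2 (r • a) k = r * dot2 a k := by
  simp [dot2, smul_eq_mul]; ring

end Aux2
/-- Lemma in Section 6: for a sufficiently smooth solution of the second grade
fluid equations with Dirichlet boundary conditions, the circulation of `v = u - αΔu` on each
inner boundary component satisfies `γ_i(t) = γ_i(0) e^{-νt/α}`. -/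
theorem secondGrade_circulation_decay
    (D : BoundedDomain) (N : ℕ) (B : BoundaryCurves D.Ω N)
    (α ν : ℝ) (hα : 0 < α) (hν : 0 < ν)
    (u : ℝ → Pt → Pt) (pr : ℝ → Pt → ℝ)
    (husmooth : ContDiff ℝ (⊤ : ℕ∞) (fun z : ℝ × Pt => u z.1 z.2))
    (hprsmooth : ContDiff ℝ (⊤ : ℕ∞) (fun z : ℝ × Pt => pr z.1 z.2))
    (hsol : IsSecondGrade α ν D.Ω u pr) :
    ∀ i : Fin N, ∀ t, 0 ≤ t →
      circulation (B.γ i) (vfield α (u t))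
        = Real.exp (-(ν * t) / α) * circulation (B.γ i) (vfield α (u 0)) := by
  obtain ⟨heq, _hdiv, hbc⟩ := hsol
  intro i
  set U : ℝ × Pt → Pt := fun z => u z.1 z.2 with hUdef
  have hU : ContDiff ℝ (⊤ : ℕ∞) U := husmooth
  set Pr : ℝ × Pt → ℝ := fun z => pr z.1 z.2 with hPrdef
  have hPr : ContDiff ℝ (⊤ : ℕ∞) Pr := hprsmooth
  have hU1 : ContDiff ℝ (⊤ : ℕ∞) (fun z => (U z).1) := contDiff_fst.comp hU
  have hU2 : ContDiff ℝ (⊤ : ℕ∞) (fun z => (U z).2) := contDiff_snd.comp hU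
  set L : ℝ × Pt → Pt := lapJ U with hLdef
  have hL : ContDiff ℝ (⊤ : ℕ∞) L := contDiff_lapJ hU
  set V : ℝ × Pt → Pt := fun z => U z - α • L z with hVdef
  have hV : ContDiff ℝ (⊤ : ℕ∞) V := hU.sub (hL.const_smul α)
  set c : ℝ → Pt := B.γ i with hcdef
  have hc : ContDiff ℝ (⊤ : ℕ∞) c := B.smooth i
  have hcc : Continuous c := hc.continuous
  have hc' : Continuous (deriv c) := hc.continuous_deriv (by simp)
  have hlap : ∀ t x, lap (u t) x = L (t, x) := fun t x => lap_slice hU t x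
  have hvf : ∀ t, vfield α (u t) = fun y => V (t, y) := by
    intro t; funext x
    show u t x - α • lap (u t) x = U (t, x) - α • L (t, x)
    rw [hlap t x]
  set Gr1 : ℝ × Pt → Pt := fun z =>
    (fderiv ℝ (fun w => (U w).1) z (0, (1, 0)),
     fderiv ℝ (fun w => (U w).1) z (0, (0, 1))) with hGr1def
  set Gr2 : ℝ × Pt → Pt := fun z =>
    (fderiv ℝ (fun w => (U w).2) z (0, (1, 0)),
     fderiv ℝ (fun w => (U w).2) z (0, (0, 1))) with hGr2def
  set S : ℝ × Pt → Pt := fun z => (V z).1 • Gr1 z + (V z).2 • Gr2 z with hSdef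
  set Gp : ℝ × Pt → Pt := fun z =>
    (fderiv ℝ Pr z (0, (1, 0)), fderiv ℝ Pr z (0, (0, 1))) with hGpdef
  set Q : ℝ × Pt → Pt := fun z => fderiv ℝ V z ((0 : ℝ), U z) with hQdef
  set W : ℝ × Pt → Pt :=
    fun z => dsl ((1 : ℝ), (0 : Pt)) V z - ν • L z + Q z + S z + Gp z with hWdef
  have hWc : Continuous W := by
    have h1 : Continuous (dsl ((1 : ℝ), (0 : Pt)) V) := (contDiff_dsl _ hV).continuous
    have h2 : Continuous fun z => ν • L z := hL.continuous.const_smul ν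
    have hQc : Continuous Q :=
      ((hV.fderiv_right (by simp)).clm_apply (contDiff_const.prodMk hU)).continuous
    have hGr1c : Continuous Gr1 :=
      ((contDiff_dsl ((0 : ℝ), ((1 : ℝ), (0 : ℝ))) hU1).continuous.prodMk
        (contDiff_dsl ((0 : ℝ), ((0 : ℝ), (1 : ℝ))) hU1).continuous)
    have hGr2c : Continuous Gr2 :=
      ((contDiff_dsl ((0 : ℝ), ((1 : ℝ), (0 : ℝ))) hU2).continuous.prodMk
        (contDiff_dsl ((0 : ℝ), ((0 : ℝ), (1 : ℝ))) hU2).continuous)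
    have hSc : Continuous S :=
      ((continuous_fst.comp hV.continuous).smul hGr1c).add
        ((continuous_snd.comp hV.continuous).smul hGr2c)
    have hGpc : Continuous Gp :=
      ((contDiff_dsl ((0 : ℝ), ((1 : ℝ), (0 : ℝ))) hPr).continuous.prodMk
        (contDiff_dsl ((0 : ℝ), ((0 : ℝ), (1 : ℝ))) hPr).continuous)
    exact ((((h1.sub h2).add hQc).add hSc).add hGpc)
  -- the PDE, in joint form, in the interior
  have hWint : ∀ t x, 0 ≤ t → x ∈ D.Ω → W (t, x) = 0 := by
    intro t x ht hx
    have ht1 : deriv (fun s => vfield α (u s) x) t = dsl ((1 : ℝ), (0 : Pt)) V (t, x) := by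
      have he : (fun s => vfield α (u s) x) = fun s => V (s, x) := by
        funext s; exact congrFun (hvf s) x
      rw [he]; exact (hasDerivAt_time hV t x).deriv
    have ht3 : pd (u t x) (vfield α (u t)) x = Q (t, x) := by
      rw [hvf t]; exact pd_slice hV t x (u t x)
    have hg1 : grad2 (fun y => (u t y).1) x = Gr1 (t, x) :=
      Prod.ext (pd_slice hU1 t x (1, 0)) (pd_slice hU1 t x (0, 1))
    have hg2 : grad2 (fun y => (u t y).2) x = Gr2 (t, x) :=
      Prod.ext (pd_slice hU2 t x (1, 0)) (pd_slice hU2 t x (0, 1))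
    have hvx : vfield α (u t) x = V (t, x) := congrFun (hvf t) x
    have ht4 : stretch (u t) (vfield α (u t)) x = S (t, x) := by
      unfold stretch
      rw [hg1, hg2, hvx]
    have ht5 : grad2 (pr t) x = Gp (t, x) :=
      Prod.ext (pd_slice hPr t x (1, 0)) (pd_slice hPr t x (0, 1))
    have h := heq t x ht hx
    rw [ht1, hlap t x, ht3, ht4, ht5] at h
    show dsl ((1 : ℝ), (0 : Pt)) V (t, x) - ν • L (t, x) + Q (t, x) + S (t, x) + Gp (t, x) = 0
    rw [h]
    exact neg_add_cancel _
  -- extend to the closure by continuity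
  have hWcl : ∀ t x, 0 ≤ t → x ∈ closure D.Ω → W (t, x) = 0 := by
    intro t x ht hx
    have hsub : closure D.Ω ⊆ (fun y => W (t, y)) ⁻¹' {0} := by
      apply closure_minimal
      · intro y hy
        simp only [Set.mem_preimage, Set.mem_singleton_iff]
        exact hWint t y ht hy
      · exact isClosed_singleton.preimage (hWc.comp (Continuous.prodMk_right t))
    simpa using hsub hx
  have hfr : ∀ s, c s ∈ frontier D.Ω := by
    intro s
    rw [B.cover]
    exact Set.mem_union_right _ (Set.mem_iUnion.2 ⟨i, ⟨s, rfl⟩⟩)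
  -- the identity on the boundary curve
  have hbd : ∀ t, 0 ≤ t → ∀ s : ℝ,
      dsl ((1 : ℝ), (0 : Pt)) V (t, c s)
        = -((ν / α) • V (t, c s)) - S (t, c s) - Gp (t, c s) := by
    intro t ht s
    have hU0 : U (t, c s) = 0 := hbc t (c s) ht (hfr s)
    have hW0 : W (t, c s) = 0 := hWcl t (c s) ht (frontier_subset_closure (hfr s))
    have hQ0 : Q (t, c s) = 0 := by
      show fderiv ℝ V (t, c s) ((0 : ℝ), U (t, c s)) = 0
      rw [hU0, Prod.mk_zero_zero, map_zero]
    have hνL : ν • L (t, c s) = -((ν / α) • V (t, c s)) := by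
      have h1 : V (t, c s) = -(α • L (t, c s)) := by
        show U (t, c s) - α • L (t, c s) = _
        rw [hU0, zero_sub]
      rw [h1, smul_neg, neg_neg, smul_smul]
      congr 1
      field_simp
    have h3 : dsl ((1 : ℝ), (0 : Pt)) V (t, c s) - ν • L (t, c s) + Q (t, c s)
        + S (t, c s) + Gp (t, c s) = 0 := hW0
    rw [hQ0, hνL] at h3
    apply eq_of_sub_eq_zero
    calc dsl ((1 : ℝ), (0 : Pt)) V (t, c s)
          - (-((ν / α) • V (t, c s)) - S (t, c s) - Gp (t, c s))
        = dsl ((1 : ℝ), (0 : Pt)) V (t, c s) - -((ν / α) • V (t, c s)) + 0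
            + S (t, c s) + Gp (t, c s) := by abel
      _ = 0 := h3
  -- dot products along the curve
  have hSdot : ∀ t, 0 ≤ t → ∀ s, dot2 (S (t, c s)) (deriv c s) = 0 := by
    intro t ht s
    have hz : ∀ σ, U (t, c σ) = 0 := fun σ => hbc t (c σ) ht (hfr σ)
    have k1 : dot2 (Gr1 (t, c s)) (deriv c s) = 0 := by
      have e1 : dot2 (Gr1 (t, c s)) (deriv c s)
          = fderiv ℝ (fun w => (U w).1) (t, c s) ((0 : ℝ), deriv c s) :=
        dot2_fderiv (fun w => (U w).1) (t, c s) (deriv c s)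
      have e2 : fderiv ℝ (fun w => (U w).1) (t, c s) ((0 : ℝ), deriv c s)
          = deriv (fun σ => (U (t, c σ)).1) s := (deriv_along hU1 hc t s).symm
      have e3 : deriv (fun σ => ((U (t, c σ)).1 : ℝ)) s = 0 := by
        have h4 : (fun σ => ((U (t, c σ)).1 : ℝ)) = fun _ => (0 : ℝ) :=
          funext fun σ => by rw [hz σ]; rfl
        rw [h4]; exact deriv_const s 0
      rw [e1, e2, e3]
    have k2 : dot2 (Gr2 (t, c s)) (deriv c s) = 0 := by
      have e1 : dot2 (Gr2 (t, c s)) (deriv c s)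
          = fderiv ℝ (fun w => (U w).2) (t, c s) ((0 : ℝ), deriv c s) :=
        dot2_fderiv (fun w => (U w).2) (t, c s) (deriv c s)
      have e2 : fderiv ℝ (fun w => (U w).2) (t, c s) ((0 : ℝ), deriv c s)
          = deriv (fun σ => (U (t, c σ)).2) s := (deriv_along hU2 hc t s).symm
      have e3 : deriv (fun σ => ((U (t, c σ)).2 : ℝ)) s = 0 := by
        have h4 : (fun σ => ((U (t, c σ)).2 : ℝ)) = fun _ => (0 : ℝ) :=
          funext fun σ => by rw [hz σ]; rfl
        rw [h4]; exact deriv_const s 0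
      rw [e1, e2, e3]
    show dot2 ((V (t, c s)).1 • Gr1 (t, c s) + (V (t, c s)).2 • Gr2 (t, c s)) (deriv c s) = 0
    rw [dot2_add_left, dot2_smul_left, dot2_smul_left, k1, k2]
    ring
  have hGpdot : ∀ t s, dot2 (Gp (t, c s)) (deriv c s) = deriv (fun σ => Pr (t, c σ)) s := by
    intro t s
    have e1 : dot2 (Gp (t, c s)) (deriv c s)
        = fderiv ℝ Pr (t, c s) ((0 : ℝ), deriv c s) := dot2_fderiv Pr (t, c s) (deriv c s)
    rw [e1]
    exact (deriv_along hPr hc t s).symm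
  -- the circulation function of time
  set Φ : ℝ → ℝ → ℝ := fun t s => dot2 (V (t, c s)) (deriv c s) with hΦdef
  set Φ' : ℝ → ℝ → ℝ :=
    fun t s => dot2 (dsl ((1 : ℝ), (0 : Pt)) V (t, c s)) (deriv c s) with hΦ'def
  set γf : ℝ → ℝ := fun t => ∫ s in (0 : ℝ)..1, Φ t s with hγdef
  have hcirc : ∀ t, circulation c (vfield α (u t)) = γf t := by
    intro t
    unfold circulation
    rw [hvf t]
  have hΦcont : ∀ t, Continuous (Φ t) := fun t =>
    continuous_dot2 (hV.continuous.comp (continuous_const.prodMk hcc)) hc'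
  have hΦ'cont : ∀ t, Continuous (Φ' t) := fun t =>
    continuous_dot2
      ((contDiff_dsl ((1 : ℝ), (0 : Pt)) hV).continuous.comp (continuous_const.prodMk hcc)) hc'
  have hΦ'joint : Continuous (fun p : ℝ × ℝ => Φ' p.1 p.2) :=
    continuous_dot2
      ((contDiff_dsl ((1 : ℝ), (0 : Pt)) hV).continuous.comp
        (continuous_fst.prodMk (hcc.comp continuous_snd)))
      (hc'.comp continuous_snd)
  -- differentiation under the integral sign
  have hder : ∀ t₁ : ℝ, HasDerivAt γf (∫ s in (0 : ℝ)..1, Φ' t₁ s) t₁ := by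
    intro t₁
    obtain ⟨C, hC⟩ := IsCompact.exists_bound_of_continuousOn
      ((isCompact_closedBall t₁ 1).prod isCompact_uIcc) hΦ'joint.continuousOn
    have key := intervalIntegral.hasDerivAt_integral_of_dominated_loc_of_deriv_le
      (F := Φ) (F' := Φ') (x₀ := t₁) (s := Metric.ball t₁ 1) (bound := fun _ => C) (a := 0) (b := 1)
      (μ := volume) (Metric.ball_mem_nhds t₁ one_pos)
      (Filter.Eventually.of_forall fun t => (hΦcont t).aestronglyMeasurable)
      ((hΦcont t₁).intervalIntegrable 0 1)
      ((hΦ'cont t₁).aestronglyMeasurable)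
      (MeasureTheory.ae_of_all _ fun s hs x hx =>
        hC (x, s) ⟨Metric.ball_subset_closedBall hx, Set.uIoc_subset_uIcc hs⟩)
      intervalIntegrable_const
      (MeasureTheory.ae_of_all _ fun s _hs x _hx => ?_)
    · exact key.2
    · -- HasDerivAt (fun x => Φ x s) (Φ' x s) x
      have hd := hasDerivAt_time hV x (c s)
      have h1 := (ContinuousLinearMap.fst ℝ ℝ ℝ).hasFDerivAt.comp_hasDerivAt x hd
      have h2 := (ContinuousLinearMap.snd ℝ ℝ ℝ).hasFDerivAt.comp_hasDerivAt x hd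
      have h3 := (h1.mul_const (deriv c s).1).add (h2.mul_const (deriv c s).2)
      exact h3
  -- the ODE satisfied by the circulation
  have hval : ∀ t, 0 ≤ t → (∫ s in (0 : ℝ)..1, Φ' t s) = -(ν / α) * γf t := by
    intro t ht
    have hPrc : ContDiff ℝ (⊤ : ℕ∞) (fun σ => Pr (t, c σ)) := hPr.comp (contDiff_const.prodMk hc)
    have hptw : ∀ s, Φ' t s = -(ν / α) * Φ t s - deriv (fun σ => Pr (t, c σ)) s := by
      intro s
      show dot2 (dsl ((1 : ℝ), (0 : Pt)) V (t, c s)) (deriv c s)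
          = -(ν / α) * dot2 (V (t, c s)) (deriv c s) - deriv (fun σ => Pr (t, c σ)) s
      rw [hbd t ht s, dot2_sub_left, dot2_sub_left, dot2_neg_left, dot2_smul_left,
        hSdot t ht s, hGpdot t s]
      ring
    rw [intervalIntegral.integral_congr
      (g := fun s => -(ν / α) * Φ t s - deriv (fun σ => Pr (t, c σ)) s) fun s _ => hptw s]
    rw [intervalIntegral.integral_sub (f := fun s => -(ν / α) * Φ t s) ((continuous_const.mul (hΦcont t)).intervalIntegrable 0 1)
      ((hPrc.continuous_deriv (by simp)).intervalIntegrable 0 1)]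
    rw [intervalIntegral.integral_const_mul]
    rw [intervalIntegral.integral_deriv_eq_sub
      (fun σ _ => (hPrc.differentiable (by simp)).differentiableAt)
      ((hPrc.continuous_deriv (by simp)).intervalIntegrable 0 1)]
    have hper : c 1 = c 0 := by
      have := B.periodic i 0
      simpa using this
    have hz : Pr (t, c 1) - Pr (t, c 0) = 0 := by rw [hper, sub_self]
    rw [show ((fun σ => Pr (t, c σ)) 1 - (fun σ => Pr (t, c σ)) 0) = 0 from hz]
    rw [sub_zero]
  -- solve the ODE
  intro t ht
  rw [hcirc t, hcirc 0]
  have hγcont : Continuous γf := continuous_iff_continuousAt.2 fun t₁ => (hder t₁).continuousAt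
  set g : ℝ → ℝ := fun τ => Real.exp (ν * τ / α) * γf τ with hgdef
  have hgd : ∀ τ, 0 ≤ τ → HasDerivAt g 0 τ := by
    intro τ hτ
    have hγ : HasDerivAt γf (-(ν / α) * γf τ) τ := by
      have h := hder τ; rw [hval τ hτ] at h; exact h
    have h1 : HasDerivAt (fun τ : ℝ => ν * τ / α) (ν / α) τ := by
      simpa using ((hasDerivAt_id τ).const_mul ν).div_const α
    have hm := h1.exp.mul hγ
    exact hm.congr_deriv (by ring)
  have hcont : ContinuousOn g (Icc 0 t) := by
    apply Continuous.continuousOn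
    exact (Real.continuous_exp.comp ((continuous_const.mul continuous_id).div_const α)).mul hγcont
  have hconst := constant_of_has_deriv_right_zero hcont
    (fun s hs => (hgd s hs.1).hasDerivWithinAt) t (right_mem_Icc.2 ht)
  have hgt : Real.exp (ν * t / α) * γf t = γf 0 := by
    have hg0 : g 0 = γf 0 := by
      show Real.exp (ν * 0 / α) * γf 0 = γf 0
      rw [mul_zero, zero_div, Real.exp_zero, one_mul]
    rw [← hg0]
    exact hconst
  have hne : Real.exp (ν * t / α) ≠ 0 := (Real.exp_pos _).ne'
  have hexp : Real.exp (-(ν * t) / α) = (Real.exp (ν * t / α))⁻¹ := by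
    rw [← Real.exp_neg]
    ring_nf
  rw [hexp, ← hgt]
  field_simp
end
end

section
/- Let u be a sufficiently smooth solution of the second grade fluid equations with Dirichlet boundary conditions on a smooth bounded domain Ω ⊂ ℝ², and set q = curl(u − αΔu). Then the space integral of the vorticity satisfies ∫_Ω q(t) = e^{−νt/α} ∫_Ω q(0) for all t ≥ 0. -/
open MeasureTheory Real Set Filter

noncomputable section

namespace SGAux

open Bornology

notation "SM" => ((⊤:ℕ∞) : WithTop ℕ∞)

lemma one_le_SM : 1 ≤ SM := le_trans (by norm_cast) (WithTop.coe_le_coe.mpr (le_top : (1:ℕ∞) ≤ ⊤))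
lemma two_le_SM : 2 ≤ SM := le_trans (by norm_cast) (WithTop.coe_le_coe.mpr (le_top : (2:ℕ∞) ≤ ⊤))
lemma SM_add_one : SM + 1 ≤ SM := by simp
lemma SM_ne_zero : SM ≠ 0 := by simp

section ddcalc

variable {E : Type*} [NormedAddCommGroup E] [NormedSpace ℝ E]
  {F : Type*} [NormedAddCommGroup F] [NormedSpace ℝ F]
  {G : Type*} [NormedAddCommGroup G] [NormedSpace ℝ G]

/-- directional derivative -/
def dd (w : E) (f : E → F) : E → F := fun p => fderiv ℝ f p w

abbrev j1 : ℝ × Pt := ((0:ℝ), ((1:ℝ), (0:ℝ)))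
abbrev j2 : ℝ × Pt := ((0:ℝ), ((0:ℝ), (1:ℝ)))
abbrev jt : ℝ × Pt := ((1:ℝ), ((0:ℝ), (0:ℝ)))

lemma dd_contDiff {f : E → F} (hf : ContDiff ℝ SM f) (w : E) : ContDiff ℝ SM (dd w f) :=
  (hf.fderiv_right SM_add_one).clm_apply contDiff_const

lemma dd_diff {f : E → F} (hf : ContDiff ℝ SM f) (w : E) : Differentiable ℝ (dd w f) :=
  (dd_contDiff hf w).differentiable SM_ne_zero

lemma dd_cont {f : E → F} (hf : ContDiff ℝ SM f) (w : E) : Continuous (dd w f) :=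
  (dd_contDiff hf w).continuous

lemma dd_comm {f : E → F} (hf : ContDiff ℝ SM f) (w₁ w₂ : E) :
    dd w₁ (dd w₂ f) = dd w₂ (dd w₁ f) := by
  funext p
  have hdf : Differentiable ℝ (fderiv ℝ f) :=
    (hf.fderiv_right (m := SM) (by simp)).differentiable (by simp)
  have key : ∀ w w' : E, dd w (dd w' f) p = fderiv ℝ (fderiv ℝ f) p w w' := by
    intro w w'
    have h2 : fderiv ℝ (fun q => (fderiv ℝ f q) w') p
        = (fderiv ℝ (fderiv ℝ f) p).flip w' + ((fderiv ℝ f p).comp (0 : E →L[ℝ] E)) := by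
      simpa using fderiv_clm_apply (hdf p) (differentiableAt_const w')
    show fderiv ℝ (fun q => (fderiv ℝ f q) w') p w = _
    rw [h2]
    simp
  rw [key, key]
  exact ((hf.contDiffAt.isSymmSndFDerivAt (by rw [minSmoothness_of_isRCLikeNormedField]; exact two_le_SM)) w₁ w₂)

lemma dd_add {f g : E → F} (hf : Differentiable ℝ f) (hg : Differentiable ℝ g) (w : E) :
    dd w (fun x => f x + g x) = fun x => dd w f x + dd w g x := by
  funext p; simp [dd, fderiv_fun_add (hf p) (hg p)]

lemma dd_sub {f g : E → F} (hf : Differentiable ℝ f) (hg : Differentiable ℝ g) (w : E) :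
    dd w (fun x => f x - g x) = fun x => dd w f x - dd w g x := by
  funext p; simp [dd, fderiv_fun_sub (hf p) (hg p)]

lemma dd_neg {f : E → F} (w : E) : dd w (fun x => -f x) = fun x => -dd w f x := by
  funext p; simp [dd]

lemma dd_const_mul {f : E → ℝ} (hf : Differentiable ℝ f) (c : ℝ) (w : E) :
    dd w (fun x => c * f x) = fun x => c * dd w f x := by
  funext p; simp [dd, fderiv_const_mul (hf p) c]

lemma dd_mul {f g : E → ℝ} (hf : Differentiable ℝ f) (hg : Differentiable ℝ g) (w : E) :
    dd w (fun x => f x * g x) = fun x => f x * dd w g x + g x * dd w f x := by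
  funext p
  simp only [dd, fderiv_fun_mul (hf p) (hg p)]
  simp [mul_comm]

lemma dd_fst {f : E → F × G} (hf : Differentiable ℝ f) (w : E) :
    dd w (fun x => (f x).1) = fun x => (dd w f x).1 := by
  funext p
  have h : HasFDerivAt (fun x => (f x).1)
      ((ContinuousLinearMap.fst ℝ F G).comp (fderiv ℝ f p)) p :=
    (hasFDerivAt_fst.comp p (hf p).hasFDerivAt)
  simp [dd, h.fderiv]

lemma dd_snd {f : E → F × G} (hf : Differentiable ℝ f) (w : E) :
    dd w (fun x => (f x).2) = fun x => (dd w f x).2 := by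
  funext p
  have h : HasFDerivAt (fun x => (f x).2)
      ((ContinuousLinearMap.snd ℝ F G).comp (fderiv ℝ f p)) p :=
    (hasFDerivAt_snd.comp p (hf p).hasFDerivAt)
  simp [dd, h.fderiv]

/-- expansion of a planar directional derivative in the coordinate directions -/
lemma pd_expand {g : Pt → F} {x : Pt} (w : Pt) :
    pd w g x = w.1 • pd (1, 0) g x + w.2 • pd (0, 1) g x := by
  have h : (w : Pt) = w.1 • ((1,0) : Pt) + w.2 • ((0,1) : Pt) := by
    simp [Prod.ext_iff]
  show fderiv ℝ g x w = _
  conv_lhs => rw [h]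
  rw [map_add, _root_.map_smul, _root_.map_smul]; rfl

lemma pd_congr {f g : Pt → F} {x : Pt} (h : f =ᶠ[nhds x] g) (v : Pt) :
    pd v f x = pd v g x := by
  simp only [pd, h.fderiv_eq]

lemma pd_prod {f g : Pt → ℝ} {x : Pt} (hf : DifferentiableAt ℝ f x)
    (hg : DifferentiableAt ℝ g x) (v : Pt) :
    pd v (fun y => (f y, g y)) x = (pd v f x, pd v g x) := by
  have h := (hf.hasFDerivAt.prodMk hg.hasFDerivAt).fderiv
  simp [pd, h]

lemma pd_neg' {f : Pt → ℝ} {x : Pt} (v : Pt) : pd v (fun y => -f y) x = -pd v f x := by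
  simp [pd]

section slice
variable {H : ℝ × Pt → F}

lemma slice_contDiff (hH : ContDiff ℝ SM H) (t : ℝ) : ContDiff ℝ SM (fun y => H (t, y)) :=
  hH.comp (contDiff_const.prodMk contDiff_id)

lemma slice_t_hasDerivAt (hH : Differentiable ℝ H) (t : ℝ) (x : Pt) :
    HasDerivAt (fun s => H (s, x)) (dd ((1:ℝ), (0:Pt)) H (t, x)) t := by
  have h1 : HasFDerivAt (fun s : ℝ => (s, x)) ((ContinuousLinearMap.id ℝ ℝ).prod 0) t :=
    (hasFDerivAt_id t).prodMk (hasFDerivAt_const x t)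
  have h2 := ((hH (t, x)).hasFDerivAt.comp t h1)
  have h3 := h2.hasDerivAt
  simpa [dd, Function.comp_def] using h3

lemma pd_slice (hH : Differentiable ℝ H) (v : Pt) (t : ℝ) :
    pd v (fun y => H (t, y)) = fun x => dd ((0:ℝ), v) H (t, x) := by
  funext x
  have h1 : HasFDerivAt (fun y : Pt => ((t, y) : ℝ × Pt))
      ((0 : Pt →L[ℝ] ℝ).prod (ContinuousLinearMap.id ℝ Pt)) x :=
    (hasFDerivAt_const t x).prodMk (hasFDerivAt_id x)
  have h2 := ((hH (t, x)).hasFDerivAt.comp x h1)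
  have h3 : fderiv ℝ (fun y => H (t, y)) x
      = (fderiv ℝ H (t, x)).comp ((0 : Pt →L[ℝ] ℝ).prod (ContinuousLinearMap.id ℝ Pt)) := h2.fderiv
  simp [pd, dd, h3]

end slice

/-- expansion of a directional derivative of a structured sum (used for the momentum
equation components). -/
lemma dd_expandA (w : E) (T a1 b1 a2 b2 a3 b3 a4 b4 : E → ℝ)
    (hT : Differentiable ℝ T) (ha1 : Differentiable ℝ a1) (hb1 : Differentiable ℝ b1)
    (ha2 : Differentiable ℝ a2) (hb2 : Differentiable ℝ b2)
    (ha3 : Differentiable ℝ a3) (hb3 : Differentiable ℝ b3)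
    (ha4 : Differentiable ℝ a4) (hb4 : Differentiable ℝ b4) :
    dd w (fun p => T p + (a1 p * b1 p + a2 p * b2 p) + (a3 p * b3 p + a4 p * b4 p)) =
      fun p => dd w T p
        + (a1 p * dd w b1 p + b1 p * dd w a1 p + (a2 p * dd w b2 p + b2 p * dd w a2 p))
        + (a3 p * dd w b3 p + b3 p * dd w a3 p + (a4 p * dd w b4 p + b4 p * dd w a4 p)) := by
  have h12 : Differentiable ℝ (fun p => a1 p * b1 p + a2 p * b2 p) :=
    (ha1.fun_mul hb1).fun_add (ha2.fun_mul hb2)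
  have h34 : Differentiable ℝ (fun p => a3 p * b3 p + a4 p * b4 p) :=
    (ha3.fun_mul hb3).fun_add (ha4.fun_mul hb4)
  rw [dd_add (hT.fun_add h12) h34, dd_add hT h12, dd_add (ha1.fun_mul hb1) (ha2.fun_mul hb2),
    dd_add (ha3.fun_mul hb3) (ha4.fun_mul hb4), dd_mul ha1 hb1, dd_mul ha2 hb2, dd_mul ha3 hb3,
    dd_mul ha4 hb4]

/-- expansion of the linear part. -/
lemma dd_expandB (w : E) (S f g : E → ℝ) (c : ℝ)
    (hS : Differentiable ℝ S) (hf : Differentiable ℝ f) (hg : Differentiable ℝ g) :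
    dd w (fun p => S p - c * (f p - g p)) = fun p => dd w S p - c * (dd w f p - dd w g p) := by
  rw [dd_sub hS ((hf.fun_sub hg).const_mul c), dd_const_mul (hf.fun_sub hg), dd_sub hf hg]

end ddcalc

/-- an open bounded preconnected nonempty subset of ℝ is an open interval -/
lemma open_preconnected_eq_Ioo {C : Set ℝ} (hC : IsOpen C) (hb : IsBounded C)
    (hcon : IsPreconnected C) (hne : C.Nonempty) :
    C = Ioo (sInf C) (sSup C) := by
  have hbdd_below : BddBelow C := hb.bddBelow
  have hbdd_above : BddAbove C := hb.bddAbove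
  have hnotmem_inf : sInf C ∉ C := fun h => by
    rcases (Metric.isOpen_iff.1 hC) _ h with ⟨ε, hε, hball⟩
    have : sInf C - ε / 2 ∈ C := by
      apply hball
      simp [Real.ball_eq_Ioo]
      constructor <;> linarith
    linarith [csInf_le hbdd_below this]
  have hnotmem_sup : sSup C ∉ C := fun h => by
    rcases (Metric.isOpen_iff.1 hC) _ h with ⟨ε, hε, hball⟩
    have : sSup C + ε / 2 ∈ C := by
      apply hball
      simp [Real.ball_eq_Ioo]
      constructor <;> linarith
    linarith [le_csSup hbdd_above this]
  apply Subset.antisymm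
  · intro x hx
    rcases lt_or_eq_of_le (csInf_le hbdd_below hx) with h | h
    · rcases lt_or_eq_of_le (le_csSup hbdd_above hx) with h' | h'
      · exact ⟨h, h'⟩
      · exact absurd (h' ▸ hx) hnotmem_sup
    · exact absurd (h ▸ hx) hnotmem_inf
  · exact (IsConnected.Ioo_csInf_csSup_subset ⟨hne, hcon⟩ hbdd_below hbdd_above)

/-- FTC on a bounded open subset of ℝ. -/
lemma integral_deriv_open_bounded {S : Set ℝ} (hS : IsOpen S) (hb : IsBounded S)
    {h : ℝ → ℝ} (hh : ContDiff ℝ SM h) (h0 : ∀ x ∈ frontier S, h x = 0) :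
    ∫ x in S, deriv h x = 0 := by
  classical
  have hdiff : Differentiable ℝ h := hh.differentiable SM_ne_zero
  have hcd : Continuous (deriv h) := hh.continuous_deriv one_le_SM
  set 𝒞 : Set (Set ℝ) := (fun x => connectedComponentIn S x) '' S with h𝒞def
  have hopen : ∀ C ∈ 𝒞, IsOpen C := by
    rintro C ⟨x, -, rfl⟩; exact hS.connectedComponentIn
  have hne : ∀ C ∈ 𝒞, C.Nonempty := by
    rintro C ⟨x, hx, rfl⟩; exact ⟨x, mem_connectedComponentIn hx⟩
  have hdisj : 𝒞.PairwiseDisjoint id := by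
    rintro C₁ ⟨x₁, hx₁, rfl⟩ C₂ ⟨x₂, hx₂, rfl⟩ hne12
    refine Set.disjoint_left.2 fun z hz1 hz2 => hne12 ?_
    simp only [id] at hz1 hz2
    show connectedComponentIn S x₁ = connectedComponentIn S x₂
    rw [connectedComponentIn_eq hz1, connectedComponentIn_eq hz2]
  have hcount : 𝒞.Countable := hdisj.countable_of_isOpen hopen hne
  have hunion : S = ⋃ C : 𝒞, (C : Set ℝ) := by
    apply Subset.antisymm
    · intro x hx
      exact mem_iUnion.2 ⟨⟨_, ⟨x, hx, rfl⟩⟩, mem_connectedComponentIn hx⟩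
    · simp only [iUnion_subset_iff]
      rintro ⟨C, ⟨x, hx, rfl⟩⟩
      exact connectedComponentIn_subset S x
  haveI : Countable ↥𝒞 := hcount.to_subtype
  have hint : IntegrableOn (deriv h) S := by
    apply (hcd.continuousOn.integrableOn_compact hb.isCompact_closure).mono_set subset_closure
  have hcomp : ∀ C ∈ 𝒞, ∫ x in C, deriv h x = 0 := by
    intro C hC
    have hCopen := hopen C hC
    have hCne := hne C hC
    have hCsub : C ⊆ S := by
      rcases hC with ⟨x, hx, rfl⟩; exact connectedComponentIn_subset S x
    have hCb : IsBounded C := hb.subset hCsub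
    have hCcon : IsPreconnected C := by
      rcases hC with ⟨x, hx, rfl⟩; exact isPreconnected_connectedComponentIn
    set a := sInf C
    set b := sSup C
    have hIoo : C = Ioo a b := open_preconnected_eq_Ioo hCopen hCb hCcon hCne
    have hab : a < b := by
      rcases hCne with ⟨z, hz⟩
      rw [hIoo] at hz; exact lt_trans hz.1 hz.2
    have hmax : ∀ w : ℝ, w ∈ S → w ∈ closure C → w ∈ C := by
      intro w hwS hwcl
      rcases hC with ⟨x, hx, rfl⟩
      rcases Metric.isOpen_iff.1 hS w hwS with ⟨ε, hε, hball⟩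
      rcases Metric.mem_closure_iff.1 hwcl ε hε with ⟨z, hzC, hdist⟩
      have hzball : z ∈ Metric.ball w ε := by rwa [Metric.mem_ball, dist_comm]
      have hu : IsPreconnected (Metric.ball w ε ∪ connectedComponentIn S x) := by
        apply IsPreconnected.union z hzball hzC
          (convex_ball w ε).isPreconnected isPreconnected_connectedComponentIn
      have hsub2 : Metric.ball w ε ∪ connectedComponentIn S x ⊆ S :=
        union_subset hball hCsub
      have hsub3 := hu.subset_connectedComponentIn (x := z) (Or.inl hzball) hsub2
      have hz2 : connectedComponentIn S x = connectedComponentIn S z :=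
        connectedComponentIn_eq hzC
      show w ∈ connectedComponentIn S x
      rw [hz2]
      exact hsub3 (Or.inl (Metric.mem_ball_self hε))
    have hafr : a ∉ S := by
      intro haS
      have hacl : a ∈ closure C := by
        rw [hIoo, closure_Ioo hab.ne]; exact ⟨le_refl a, hab.le⟩
      have := hmax a haS hacl
      rw [hIoo] at this; exact lt_irrefl a this.1
    have hbfr : b ∉ S := by
      intro hbS
      have hbcl : b ∈ closure C := by
        rw [hIoo, closure_Ioo hab.ne]; exact ⟨hab.le, le_refl b⟩
      have := hmax b hbS hbcl
      rw [hIoo] at this; exact lt_irrefl b this.2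
    have ha_cl : a ∈ closure C := by
      rw [hIoo, closure_Ioo hab.ne]; exact ⟨le_refl a, hab.le⟩
    have hb_cl : b ∈ closure C := by
      rw [hIoo, closure_Ioo hab.ne]; exact ⟨hab.le, le_refl b⟩
    have ha0 : h a = 0 := h0 a (by
      rw [hS.frontier_eq]; exact ⟨closure_mono hCsub ha_cl, hafr⟩)
    have hb0 : h b = 0 := h0 b (by
      rw [hS.frontier_eq]; exact ⟨closure_mono hCsub hb_cl, hbfr⟩)
    rw [hIoo, ← integral_Ioc_eq_integral_Ioo, ← intervalIntegral.integral_of_le hab.le,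
      intervalIntegral.integral_deriv_eq_sub (fun x _ => hdiff x)
        (hcd.intervalIntegrable a b), ha0, hb0, sub_zero]
  have hm : ∀ C : 𝒞, MeasurableSet (C : Set ℝ) := fun C => (hopen C C.2).measurableSet
  have hd : Pairwise (Function.onFun Disjoint fun C : 𝒞 => (C : Set ℝ)) := hdisj.subtype
  have hfi : IntegrableOn (deriv h) (⋃ C : 𝒞, (C : Set ℝ)) := hunion ▸ hint
  calc ∫ x in S, deriv h x = ∫ x in ⋃ C : 𝒞, (C : Set ℝ), deriv h x := by rw [← hunion]
    _ = ∑' C : 𝒞, ∫ x in (C : Set ℝ), deriv h x := integral_iUnion hm hd hfi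
    _ = ∑' _C : 𝒞, (0:ℝ) := by
        congr 1
        funext C
        exact hcomp C C.2
    _ = 0 := tsum_zero

/-- first variable divergence lemma. -/
lemma integral_pd1_zero {Ω : Set Pt} (hΩ : IsOpen Ω) (hb : IsBounded Ω) {g : Pt → ℝ}
    (hg : ContDiff ℝ SM g) (h0 : ∀ x ∈ frontier Ω, g x = 0) :
    ∫ x in Ω, pd (1, 0) g x = 0 := by
  have hgd : Differentiable ℝ g := hg.differentiable SM_ne_zero
  have hcont : Continuous (fun x : Pt => pd (1,0) g x) := by
    have h1 := (hg.fderiv_right (m := SM) (by simp)).continuous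
    exact (ContinuousLinearMap.apply ℝ ℝ ((1:ℝ),(0:ℝ))).continuous.comp h1
  have hint : IntegrableOn (fun x => pd (1,0) g x) Ω := by
    exact (hcont.continuousOn.integrableOn_compact hb.isCompact_closure).mono_set subset_closure
  have hindint : Integrable (Ω.indicator fun x => pd (1,0) g x) := by
    rwa [integrable_indicator_iff hΩ.measurableSet]
  rw [← integral_indicator hΩ.measurableSet]
  rw [MeasureTheory.Measure.volume_eq_prod ℝ ℝ] at hindint ⊢
  rw [integral_prod_symm _ hindint]
  have inner : ∀ y : ℝ, ∫ x : ℝ, (Ω.indicator fun x => pd (1,0) g x) (x, y) = 0 := by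
    intro y
    set S : Set ℝ := {x | (x, y) ∈ Ω} with hSdef
    have hSopen : IsOpen S := hΩ.preimage (by fun_prop)
    have hSb : IsBounded S := by
      have h1 : S ⊆ Prod.fst '' Ω := fun x hx => ⟨(x,y), hx, rfl⟩
      exact (((LipschitzWith.prod_fst).isBounded_image hb)).subset h1
    set h : ℝ → ℝ := fun x => g (x, y) with hhdef
    have hhsm : ContDiff ℝ SM h := hg.comp (contDiff_id.prodMk contDiff_const)
    have hderiv : ∀ x : ℝ, deriv h x = pd (1,0) g (x, y) := by
      intro x
      have h1 : HasFDerivAt (fun x : ℝ => ((x, y) : Pt))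
          ((ContinuousLinearMap.id ℝ ℝ).prod 0) x :=
        (hasFDerivAt_id x).prodMk (hasFDerivAt_const y x)
      have h2 := ((hgd (x, y)).hasFDerivAt.comp x h1).hasDerivAt
      simpa [pd, Function.comp_def] using h2.deriv
    have hfr : ∀ x ∈ frontier S, h x = 0 := by
      intro x hx
      apply h0
      have hcl : x ∈ closure S → (x, y) ∈ closure Ω := by
        intro hxc
        have hc : Continuous (fun x : ℝ => ((x, y) : Pt)) := by fun_prop
        exact hc.closure_preimage_subset Ω hxc
      rw [hΩ.frontier_eq]
      rw [hSopen.frontier_eq] at hx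
      exact ⟨hcl hx.1, fun hmem => hx.2 hmem⟩
    have heq : ∀ x : ℝ, (Ω.indicator fun p => pd (1,0) g p) (x, y) = S.indicator (deriv h) x := by
      intro x
      by_cases hx : (x, y) ∈ Ω <;>
        simp [indicator, hx, hSdef, hderiv x]
    rw [integral_congr_ae (Eventually.of_forall heq)]
    rw [integral_indicator hSopen.measurableSet]
    exact integral_deriv_open_bounded hSopen hSb hhsm hfr
  rw [integral_congr_ae (Eventually.of_forall inner)]
  simp

/-- second variable divergence lemma. -/
lemma integral_pd2_zero {Ω : Set Pt} (hΩ : IsOpen Ω) (hb : IsBounded Ω) {g : Pt → ℝ}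
    (hg : ContDiff ℝ SM g) (h0 : ∀ x ∈ frontier Ω, g x = 0) :
    ∫ x in Ω, pd (0, 1) g x = 0 := by
  have hgd : Differentiable ℝ g := hg.differentiable SM_ne_zero
  have hcont : Continuous (fun x : Pt => pd (0,1) g x) := by
    have h1 := (hg.fderiv_right (m := SM) (by simp)).continuous
    exact (ContinuousLinearMap.apply ℝ ℝ ((0:ℝ),(1:ℝ))).continuous.comp h1
  have hint : IntegrableOn (fun x => pd (0,1) g x) Ω :=
    (hcont.continuousOn.integrableOn_compact hb.isCompact_closure).mono_set subset_closure
  have hindint : Integrable (Ω.indicator fun x => pd (0,1) g x) := by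
    rwa [integrable_indicator_iff hΩ.measurableSet]
  rw [← integral_indicator hΩ.measurableSet]
  rw [MeasureTheory.Measure.volume_eq_prod ℝ ℝ] at hindint ⊢
  rw [integral_prod _ hindint]
  have inner : ∀ x : ℝ, ∫ y : ℝ, (Ω.indicator fun p => pd (0,1) g p) (x, y) = 0 := by
    intro x
    set S : Set ℝ := {y | (x, y) ∈ Ω} with hSdef
    have hSopen : IsOpen S := hΩ.preimage (by fun_prop)
    have hSb : IsBounded S := by
      have h1 : S ⊆ Prod.snd '' Ω := fun y hy => ⟨(x,y), hy, rfl⟩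
      exact (((LipschitzWith.prod_snd).isBounded_image hb)).subset h1
    set h : ℝ → ℝ := fun y => g (x, y) with hhdef
    have hhsm : ContDiff ℝ SM h := hg.comp (contDiff_const.prodMk contDiff_id)
    have hderiv : ∀ y : ℝ, deriv h y = pd (0,1) g (x, y) := by
      intro y
      have h1 : HasFDerivAt (fun y : ℝ => ((x, y) : Pt))
          ((0 : ℝ →L[ℝ] ℝ).prod (ContinuousLinearMap.id ℝ ℝ)) y :=
        (hasFDerivAt_const x y).prodMk (hasFDerivAt_id y)
      have h2 := ((hgd (x, y)).hasFDerivAt.comp y h1).hasDerivAt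
      simpa [pd, Function.comp_def] using h2.deriv
    have hfr : ∀ y ∈ frontier S, h y = 0 := by
      intro y hy
      apply h0
      have hcl : y ∈ closure S → (x, y) ∈ closure Ω := by
        intro hyc
        have hc : Continuous (fun y : ℝ => ((x, y) : Pt)) := by fun_prop
        exact hc.closure_preimage_subset Ω hyc
      rw [hΩ.frontier_eq]
      rw [hSopen.frontier_eq] at hy
      exact ⟨hcl hy.1, fun hmem => hy.2 hmem⟩
    have heq : ∀ y : ℝ, (Ω.indicator fun p => pd (0,1) g p) (x, y) = S.indicator (deriv h) y := by
      intro y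
      by_cases hy : (x, y) ∈ Ω <;> simp [indicator, hy, hSdef, hderiv y]
    rw [integral_congr_ae (Eventually.of_forall heq)]
    rw [integral_indicator hSopen.measurableSet]
    exact integral_deriv_open_bounded hSopen hSb hhsm hfr
  rw [integral_congr_ae (Eventually.of_forall inner)]
  simp

end SGAux

/-- relation (26) in the paper: for a sufficiently smooth solution of the
second grade fluid equations with Dirichlet boundary conditions, the space integral of the
vorticity `q = curl(u - αΔu)` satisfies `∫_Ω q(t) = e^{-νt/α} ∫_Ω q(0)`. -/
theorem secondGrade_vorticity_integral_decay
    (D : BoundedDomain) (α ν : ℝ) (hα : 0 < α) (hν : 0 < ν)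
    (u : ℝ → Pt → Pt) (pr : ℝ → Pt → ℝ)
    (husmooth : ContDiff ℝ (⊤ : ℕ∞) (fun z : ℝ × Pt => u z.1 z.2))
    (hprsmooth : ContDiff ℝ (⊤ : ℕ∞) (fun z : ℝ × Pt => pr z.1 z.2))
    (hsol : IsSecondGrade α ν D.Ω u pr) :
    ∀ t, 0 ≤ t →
      (∫ x in D.Ω, curl2 (vfield α (u t)) x)
        = Real.exp (-(ν * t) / α) * ∫ x in D.Ω, curl2 (vfield α (u 0)) x := by
  classical
  open SGAux in
  obtain ⟨hmom, hdiv, hbc⟩ := hsol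
  have hΩo : IsOpen D.Ω := D.isOpen
  have hΩb : Bornology.IsBounded D.Ω := D.bounded
  -- joint space-time functions
  set W : ℝ × Pt → Pt := fun p => u p.1 p.2 with hWdef
  have hW : ContDiff ℝ SM W := husmooth.of_le (by simp)
  have hWd : Differentiable ℝ W := hW.differentiable SM_ne_zero
  set P : ℝ × Pt → ℝ := fun p => pr p.1 p.2 with hPdef
  have hP : ContDiff ℝ SM P := hprsmooth.of_le (by simp)
  set U1 : ℝ × Pt → ℝ := fun p => (u p.1 p.2).1 with hU1def
  set U2 : ℝ × Pt → ℝ := fun p => (u p.1 p.2).2 with hU2def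
  have hU1 : ContDiff ℝ SM U1 := contDiff_fst.comp hW
  have hU2 : ContDiff ℝ SM U2 := contDiff_snd.comp hW
  have hU1d : Differentiable ℝ U1 := hU1.differentiable SM_ne_zero
  have hU2d : Differentiable ℝ U2 := hU2.differentiable SM_ne_zero
  set L1 : ℝ × Pt → ℝ := fun p => dd j1 (dd j1 U1) p + dd j2 (dd j2 U1) p with hL1def
  set L2 : ℝ × Pt → ℝ := fun p => dd j1 (dd j1 U2) p + dd j2 (dd j2 U2) p with hL2def
  have hL1 : ContDiff ℝ SM L1 :=
    (dd_contDiff (dd_contDiff hU1 j1) j1).add (dd_contDiff (dd_contDiff hU1 j2) j2)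
  have hL2 : ContDiff ℝ SM L2 :=
    (dd_contDiff (dd_contDiff hU2 j1) j1).add (dd_contDiff (dd_contDiff hU2 j2) j2)
  set V1 : ℝ × Pt → ℝ := fun p => U1 p - α * L1 p with hV1def
  set V2 : ℝ × Pt → ℝ := fun p => U2 p - α * L2 p with hV2def
  have hV1 : ContDiff ℝ SM V1 := hU1.sub (contDiff_const.mul hL1)
  have hV2 : ContDiff ℝ SM V2 := hU2.sub (contDiff_const.mul hL2)
  have hV1d : Differentiable ℝ V1 := hV1.differentiable SM_ne_zero
  have hV2d : Differentiable ℝ V2 := hV2.differentiable SM_ne_zero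
  set Q : ℝ × Pt → ℝ := fun p => dd j1 V2 p - dd j2 V1 p with hQdef
  have hQsm : ContDiff ℝ SM Q := (dd_contDiff hV2 j1).sub (dd_contDiff hV1 j2)
  have hQd : Differentiable ℝ Q := hQsm.differentiable SM_ne_zero
  -- component bridges
  have c1 : ∀ w : ℝ × Pt, dd w U1 = fun p => (dd w W p).1 := fun w => dd_fst hWd w
  have c2 : ∀ w : ℝ × Pt, dd w U2 = fun p => (dd w W p).2 := fun w => dd_snd hWd w
  have c11 : ∀ w w' : ℝ × Pt, dd w (dd w' U1) = fun p => (dd w (dd w' W) p).1 := by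
    intro w w'; rw [c1 w']; exact dd_fst (dd_diff hW w') w
  have c22 : ∀ w w' : ℝ × Pt, dd w (dd w' U2) = fun p => (dd w (dd w' W) p).2 := by
    intro w w'; rw [c2 w']; exact dd_snd (dd_diff hW w') w
  -- Laplacian bridge
  have hlapb : ∀ (t : ℝ) (x : Pt), lap (u t) x = (L1 (t, x), L2 (t, x)) := by
    intro t x
    show pd (1,0) (pd (1,0) (u t)) x + pd (0,1) (pd (0,1) (u t)) x = _
    have e1 : pd ((1:ℝ),(0:ℝ)) (u t) = fun y => dd j1 W (t, y) := pd_slice hWd (1,0) t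
    have e2 : pd ((0:ℝ),(1:ℝ)) (u t) = fun y => dd j2 W (t, y) := pd_slice hWd (0,1) t
    rw [e1, e2, pd_slice (dd_diff hW j1) (1,0) t, pd_slice (dd_diff hW j2) (0,1) t]
    have hL1x : L1 (t, x) = (dd j1 (dd j1 W) (t,x)).1 + (dd j2 (dd j2 W) (t,x)).1 := by
      simp only [hL1def, c11 j1 j1, c11 j2 j2]
    have hL2x : L2 (t, x) = (dd j1 (dd j1 W) (t,x)).2 + (dd j2 (dd j2 W) (t,x)).2 := by
      simp only [hL2def, c22 j1 j1, c22 j2 j2]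
    rw [hL1x, hL2x]
    exact Prod.ext rfl rfl
  -- vfield bridge
  have hvfb : ∀ (t : ℝ) (x : Pt), vfield α (u t) x = (V1 (t,x), V2 (t,x)) := by
    intro t x
    show u t x - α • lap (u t) x = _
    rw [hlapb t x]
    have h1 : V1 (t,x) = U1 (t,x) - α * L1 (t,x) := by simp only [hV1def]
    have h2 : V2 (t,x) = U2 (t,x) - α * L2 (t,x) := by simp only [hV2def]
    rw [h1, h2]
    have hu1 : U1 (t,x) = (u t x).1 := by simp only [hU1def]
    have hu2 : U2 (t,x) = (u t x).2 := by simp only [hU2def]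
    rw [hu1, hu2]
    exact Prod.ext rfl rfl
  have hvfun : ∀ t : ℝ, vfield α (u t) = fun y => (V1 (t,y), V2 (t,y)) :=
    fun t => funext fun y => hvfb t y
  -- curl of vfield bridge
  have hqb : ∀ (t : ℝ) (x : Pt), curl2 (vfield α (u t)) x = Q (t,x) := by
    intro t x
    show pd (1,0) (fun y => (vfield α (u t) y).2) x - pd (0,1) (fun y => (vfield α (u t) y).1) x = _
    rw [hvfun t]
    have h2 : (fun y => (((V1 (t,y), V2 (t,y)) : Pt)).2) = fun y => V2 (t,y) := rfl
    have h1 : (fun y => (((V1 (t,y), V2 (t,y)) : Pt)).1) = fun y => V1 (t,y) := rfl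
    rw [h1, h2, pd_slice hV2d (1,0) t, pd_slice hV1d (0,1) t]
  -- time derivative bridge
  have hdtb : ∀ (t : ℝ) (x : Pt),
      deriv (fun s => vfield α (u s) x) t = (dd jt V1 (t,x), dd jt V2 (t,x)) := by
    intro t x
    have hfun : (fun s => vfield α (u s) x) = fun s => ((V1 (s,x), V2 (s,x)) : Pt) :=
      funext fun s => hvfb s x
    rw [hfun]
    exact ((slice_t_hasDerivAt hV1d t x).prodMk (slice_t_hasDerivAt hV2d t x)).deriv
  -- transport bridge
  have htrb : ∀ (t : ℝ) (x : Pt), pd (u t x) (vfield α (u t)) x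
      = ((U1 (t,x) * dd j1 V1 (t,x) + U2 (t,x) * dd j2 V1 (t,x),
          U1 (t,x) * dd j1 V2 (t,x) + U2 (t,x) * dd j2 V2 (t,x)) : Pt) := by
    intro t x
    rw [pd_expand (u t x), hvfun t]
    have hd1 : DifferentiableAt ℝ (fun y => V1 (t,y)) x :=
      ((slice_contDiff hV1 t).differentiable SM_ne_zero) x
    have hd2 : DifferentiableAt ℝ (fun y => V2 (t,y)) x :=
      ((slice_contDiff hV2 t).differentiable SM_ne_zero) x
    rw [pd_prod hd1 hd2 (1,0), pd_prod hd1 hd2 (0,1),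
      pd_slice hV1d (1,0) t, pd_slice hV1d (0,1) t,
      pd_slice hV2d (1,0) t, pd_slice hV2d (0,1) t]
    have hu1 : U1 (t,x) = (u t x).1 := by simp only [hU1def]
    have hu2 : U2 (t,x) = (u t x).2 := by simp only [hU2def]
    rw [hu1, hu2]
    simp [Prod.ext_iff, smul_eq_mul]
  -- stretch bridge
  have hstrb : ∀ (t : ℝ) (x : Pt), stretch (u t) (vfield α (u t)) x
      = ((V1 (t,x) * dd j1 U1 (t,x) + V2 (t,x) * dd j1 U2 (t,x),
          V1 (t,x) * dd j2 U1 (t,x) + V2 (t,x) * dd j2 U2 (t,x)) : Pt) := by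
    intro t x
    show (vfield α (u t) x).1 • grad2 (fun y => (u t y).1) x
        + (vfield α (u t) x).2 • grad2 (fun y => (u t y).2) x = _
    rw [hvfb t x]
    have hg1 : grad2 (fun y => (u t y).1) x = ((dd j1 U1 (t,x), dd j2 U1 (t,x)) : Pt) := by
      have hs : (fun y => (u t y).1) = fun y => U1 (t, y) := by
        funext y; simp only [hU1def]
      show (pd (1,0) (fun y => (u t y).1) x, pd (0,1) (fun y => (u t y).1) x) = _
      rw [hs, pd_slice hU1d (1,0) t, pd_slice hU1d (0,1) t]
    have hg2 : grad2 (fun y => (u t y).2) x = ((dd j1 U2 (t,x), dd j2 U2 (t,x)) : Pt) := by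
      have hs : (fun y => (u t y).2) = fun y => U2 (t, y) := by
        funext y; simp only [hU2def]
      show (pd (1,0) (fun y => (u t y).2) x, pd (0,1) (fun y => (u t y).2) x) = _
      rw [hs, pd_slice hU2d (1,0) t, pd_slice hU2d (0,1) t]
    rw [hg1, hg2]
    simp [Prod.ext_iff, smul_eq_mul]
  -- divergence bridge
  have hdivb : ∀ (t : ℝ) (x : Pt), div2 (u t) x = dd j1 U1 (t,x) + dd j2 U2 (t,x) := by
    intro t x
    show pd (1,0) (fun y => (u t y).1) x + pd (0,1) (fun y => (u t y).2) x = _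
    have hs1 : (fun y => (u t y).1) = fun y => U1 (t, y) := by funext y; simp only [hU1def]
    have hs2 : (fun y => (u t y).2) = fun y => U2 (t, y) := by funext y; simp only [hU2def]
    rw [hs1, hs2, pd_slice hU1d (1,0) t, pd_slice hU2d (0,1) t]
  -- the momentum vector field bridge
  set T1 : ℝ × Pt → ℝ := fun p => dd jt V1 p - ν / α * (U1 p - V1 p) with hT1def
  set T2 : ℝ × Pt → ℝ := fun p => dd jt V2 p - ν / α * (U2 p - V2 p) with hT2def
  have hT1 : ContDiff ℝ SM T1 :=
    (dd_contDiff hV1 jt).sub (contDiff_const.mul (hU1.sub hV1))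
  have hT2 : ContDiff ℝ SM T2 :=
    (dd_contDiff hV2 jt).sub (contDiff_const.mul (hU2.sub hV2))
  set A1 : ℝ × Pt → ℝ := fun p =>
    T1 p + (U1 p * dd j1 V1 p + U2 p * dd j2 V1 p) + (V1 p * dd j1 U1 p + V2 p * dd j1 U2 p)
    with hA1def
  set A2 : ℝ × Pt → ℝ := fun p =>
    T2 p + (U1 p * dd j1 V2 p + U2 p * dd j2 V2 p) + (V1 p * dd j2 U1 p + V2 p * dd j2 U2 p)
    with hA2def
  have hA1sm : ContDiff ℝ SM A1 :=
    (hT1.add ((hU1.mul (dd_contDiff hV1 j1)).add (hU2.mul (dd_contDiff hV1 j2)))).add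
      ((hV1.mul (dd_contDiff hU1 j1)).add (hV2.mul (dd_contDiff hU2 j1)))
  have hA2sm : ContDiff ℝ SM A2 :=
    (hT2.add ((hU1.mul (dd_contDiff hV2 j1)).add (hU2.mul (dd_contDiff hV2 j2)))).add
      ((hV1.mul (dd_contDiff hU1 j2)).add (hV2.mul (dd_contDiff hU2 j2)))
  have hA : ∀ (t : ℝ) (x : Pt),
      deriv (fun s => vfield α (u s) x) t - ν • lap (u t) x + pd (u t x) (vfield α (u t)) x
        + stretch (u t) (vfield α (u t)) x = ((A1 (t,x), A2 (t,x)) : Pt) := by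
    intro t x
    rw [hdtb t x, hlapb t x, htrb t x, hstrb t x]
    have hr1 : ν * L1 (t,x) = ν / α * (U1 (t,x) - V1 (t,x)) := by
      have : V1 (t,x) = U1 (t,x) - α * L1 (t,x) := by simp only [hV1def]
      rw [this]; field_simp; ring
    have hr2 : ν * L2 (t,x) = ν / α * (U2 (t,x) - V2 (t,x)) := by
      have : V2 (t,x) = U2 (t,x) - α * L2 (t,x) := by simp only [hV2def]
      rw [this]; field_simp; ring
    have hAx1 : A1 (t,x) = T1 (t,x) + (U1 (t,x) * dd j1 V1 (t,x) + U2 (t,x) * dd j2 V1 (t,x))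
        + (V1 (t,x) * dd j1 U1 (t,x) + V2 (t,x) * dd j1 U2 (t,x)) := by simp only [hA1def]
    have hAx2 : A2 (t,x) = T2 (t,x) + (U1 (t,x) * dd j1 V2 (t,x) + U2 (t,x) * dd j2 V2 (t,x))
        + (V1 (t,x) * dd j2 U1 (t,x) + V2 (t,x) * dd j2 U2 (t,x)) := by simp only [hA2def]
    have hTx1 : T1 (t,x) = dd jt V1 (t,x) - ν / α * (U1 (t,x) - V1 (t,x)) := by
      simp only [hT1def]
    have hTx2 : T2 (t,x) = dd jt V2 (t,x) - ν / α * (U2 (t,x) - V2 (t,x)) := by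
      simp only [hT2def]
    rw [hAx1, hAx2, hTx1, hTx2, ← hr1, ← hr2]
    simp only [Prod.ext_iff, Prod.fst_sub, Prod.snd_sub, Prod.fst_add, Prod.snd_add,
      Prod.smul_fst, Prod.smul_snd, smul_eq_mul]
    constructor <;> trivial
  -- pointwise vorticity equation
  have hpoint : ∀ (t : ℝ) (x : Pt), 0 ≤ t → x ∈ D.Ω →
      dd jt Q (t,x) = -(U1 (t,x) * dd j1 Q (t,x) + U2 (t,x) * dd j2 Q (t,x))
        + (ν/α) * ((dd j1 U2 (t,x) - dd j2 U1 (t,x)) - Q (t,x)) := by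
    intro t x ht hx
    have hwhole : ∀ y ∈ D.Ω, ((A1 (t,y), A2 (t,y)) : Pt) = -grad2 (pr t) y := fun y hy =>
      (hA t y).symm.trans (hmom t y ht hy)
    have hev2 : (fun y => A2 (t, y)) =ᶠ[nhds x] (fun y => (-grad2 (pr t) y).2) := by
      filter_upwards [hΩo.mem_nhds hx] with y hy
      exact congrArg Prod.snd (hwhole y hy)
    have hev1 : (fun y => A1 (t, y)) =ᶠ[nhds x] (fun y => (-grad2 (pr t) y).1) := by
      filter_upwards [hΩo.mem_nhds hx] with y hy
      exact congrArg Prod.fst (hwhole y hy)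
    have hc2 : pd (1,0) (fun y => A2 (t,y)) x = pd (1,0) (fun y => (-grad2 (pr t) y).2) x :=
      pd_congr hev2 _
    have hc1 : pd (0,1) (fun y => A1 (t,y)) x = pd (0,1) (fun y => (-grad2 (pr t) y).1) x :=
      pd_congr hev1 _
    have hpr2 : (fun y => (-grad2 (pr t) y).2) = fun y => -(dd j2 P (t,y)) := by
      funext y
      show -(pd (0,1) (pr t) y) = _
      have hs : (pr t : Pt → ℝ) = fun y => P (t, y) := by funext y; simp only [hPdef]
      rw [hs, pd_slice (hP.differentiable SM_ne_zero) (0,1) t]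
    have hpr1 : (fun y => (-grad2 (pr t) y).1) = fun y => -(dd j1 P (t,y)) := by
      funext y
      show -(pd (1,0) (pr t) y) = _
      have hs : (pr t : Pt → ℝ) = fun y => P (t, y) := by funext y; simp only [hPdef]
      rw [hs, pd_slice (hP.differentiable SM_ne_zero) (1,0) t]
    have hval2 : pd (1,0) (fun y => -(dd j2 P (t,y))) x = -(dd j1 (dd j2 P) (t,x)) := by
      rw [pd_neg', pd_slice (dd_diff hP j2) (1,0) t]
    have hval1 : pd (0,1) (fun y => -(dd j1 P (t,y))) x = -(dd j2 (dd j1 P) (t,x)) := by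
      rw [pd_neg', pd_slice (dd_diff hP j1) (0,1) t]
    have hE : dd j1 A2 (t,x) - dd j2 A1 (t,x) = 0 := by
      have e2 : pd (1,0) (fun y => A2 (t,y)) x = dd j1 A2 (t,x) := by
        rw [pd_slice (hA2sm.differentiable SM_ne_zero) (1,0) t]
      have e1 : pd (0,1) (fun y => A1 (t,y)) x = dd j2 A1 (t,x) := by
        rw [pd_slice (hA1sm.differentiable SM_ne_zero) (0,1) t]
      rw [← e2, ← e1, hc2, hc1, hpr2, hpr1, hval2, hval1, dd_comm hP j1 j2]
      ring
    -- expansions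
    have hT2exp : dd j1 T2 = fun p => dd j1 (dd jt V2) p
        - ν / α * (dd j1 U2 p - dd j1 V2 p) := by
      rw [hT2def]; exact dd_expandB j1 (dd jt V2) U2 V2 (ν/α) (dd_diff hV2 jt) hU2d hV2d
    have hT1exp : dd j2 T1 = fun p => dd j2 (dd jt V1) p
        - ν / α * (dd j2 U1 p - dd j2 V1 p) := by
      rw [hT1def]; exact dd_expandB j2 (dd jt V1) U1 V1 (ν/α) (dd_diff hV1 jt) hU1d hV1d
    have hdd2 : dd j1 A2 = fun p => dd j1 T2 p
        + (U1 p * dd j1 (dd j1 V2) p + dd j1 V2 p * dd j1 U1 p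
          + (U2 p * dd j1 (dd j2 V2) p + dd j2 V2 p * dd j1 U2 p))
        + (V1 p * dd j1 (dd j2 U1) p + dd j2 U1 p * dd j1 V1 p
          + (V2 p * dd j1 (dd j2 U2) p + dd j2 U2 p * dd j1 V2 p)) := by
      rw [hA2def]
      exact dd_expandA j1 T2 U1 (dd j1 V2) U2 (dd j2 V2) V1 (dd j2 U1) V2 (dd j2 U2)
        (hT2.differentiable SM_ne_zero) hU1d (dd_diff hV2 j1) hU2d (dd_diff hV2 j2)
        hV1d (dd_diff hU1 j2) hV2d (dd_diff hU2 j2)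
    have hdd1 : dd j2 A1 = fun p => dd j2 T1 p
        + (U1 p * dd j2 (dd j1 V1) p + dd j1 V1 p * dd j2 U1 p
          + (U2 p * dd j2 (dd j2 V1) p + dd j2 V1 p * dd j2 U2 p))
        + (V1 p * dd j2 (dd j1 U1) p + dd j1 U1 p * dd j2 V1 p
          + (V2 p * dd j2 (dd j1 U2) p + dd j1 U2 p * dd j2 V2 p)) := by
      rw [hA1def]
      exact dd_expandA j2 T1 U1 (dd j1 V1) U2 (dd j2 V1) V1 (dd j1 U1) V2 (dd j1 U2)
        (hT1.differentiable SM_ne_zero) hU1d (dd_diff hV1 j1) hU2d (dd_diff hV1 j2)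
        hV1d (dd_diff hU1 j1) hV2d (dd_diff hU2 j1)
    rw [hdd2, hdd1, hT2exp, hT1exp] at hE
    simp only at hE
    rw [dd_comm hV2 j1 jt, dd_comm hV1 j2 jt, dd_comm hV2 j1 j2, dd_comm hV1 j2 j1,
      dd_comm hU1 j2 j1, dd_comm hU2 j2 j1] at hE
    -- goal rewrites
    have hQt : dd jt Q = fun p => dd jt (dd j1 V2) p - dd jt (dd j2 V1) p := by
      rw [hQdef]; exact dd_sub (dd_diff hV2 j1) (dd_diff hV1 j2) jt
    have hQ1 : dd j1 Q = fun p => dd j1 (dd j1 V2) p - dd j1 (dd j2 V1) p := by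
      rw [hQdef]; exact dd_sub (dd_diff hV2 j1) (dd_diff hV1 j2) j1
    have hQ2 : dd j2 Q = fun p => dd j2 (dd j1 V2) p - dd j2 (dd j2 V1) p := by
      rw [hQdef]; exact dd_sub (dd_diff hV2 j1) (dd_diff hV1 j2) j2
    have hQx : Q (t,x) = dd j1 V2 (t,x) - dd j2 V1 (t,x) := by simp only [hQdef]
    rw [hQt, hQ1, hQ2]
    simp only
    rw [hQx]
    have hdivloc : dd j1 U1 (t,x) + dd j2 U2 (t,x) = 0 := by
      rw [← hdivb t x]; exact hdiv t x ht hx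
    linear_combination hE - (dd j1 V2 (t,x) - dd j2 V1 (t,x)) * hdivloc
  -- integrability helper
  have hμfin : volume D.Ω < ⊤ :=
    lt_of_le_of_lt (measure_mono subset_closure) hΩb.isCompact_closure.measure_lt_top
  haveI : IsFiniteMeasure (volume.restrict D.Ω) :=
    ⟨by rwa [Measure.restrict_apply_univ]⟩
  have intOn : ∀ (f : ℝ × Pt → ℝ), Continuous f → ∀ t : ℝ,
      IntegrableOn (fun x => f (t, x)) D.Ω := by
    intro f hf t
    exact (((hf.comp (Continuous.prodMk_right t)).continuousOn.integrableOn_compact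
      hΩb.isCompact_closure).mono_set subset_closure)
  have hQcont : Continuous Q := hQsm.continuous
  have hdtQcont : Continuous (dd jt Q) := dd_cont hQsm jt
  set Fn : ℝ → ℝ := fun t => ∫ x in D.Ω, Q (t, x) with hFndef
  -- differentiation under the integral sign
  have hFderiv : ∀ t₀ : ℝ, HasDerivAt Fn (∫ x in D.Ω, dd jt Q (t₀, x)) t₀ := by
    intro t₀
    obtain ⟨C, hC⟩ : ∃ C, ∀ p ∈ Set.Icc (t₀-1) (t₀+1) ×ˢ closure D.Ω, ‖dd jt Q p‖ ≤ C :=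
      (isCompact_Icc.prod hΩb.isCompact_closure).exists_bound_of_continuousOn
        hdtQcont.continuousOn
    have main := hasDerivAt_integral_of_dominated_loc_of_deriv_le (s := Metric.ball t₀ 1) (Metric.ball_mem_nhds t₀ one_pos)
      (F := fun t x => Q (t,x)) (F' := fun t x => dd jt Q (t,x))
      (μ := volume.restrict D.Ω) (x₀ := t₀) (bound := fun _ => C)
      (Eventually.of_forall fun t =>
        ((hQcont.comp (Continuous.prodMk_right t)).aestronglyMeasurable))
      (intOn Q hQcont t₀)
      ((hdtQcont.comp (Continuous.prodMk_right t₀)).aestronglyMeasurable)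
      ?_ (integrable_const C) ?_
    · exact main.2
    · apply (ae_restrict_iff' hΩo.measurableSet).2
      apply Eventually.of_forall
      intro x hx t htb
      apply hC
      refine ⟨?_, subset_closure hx⟩
      rw [Metric.mem_ball, Real.dist_eq] at htb
      constructor <;> [linarith [abs_lt.1 htb]; linarith [abs_lt.1 htb]]
    · apply Eventually.of_forall
      intro x t _
      exact slice_t_hasDerivAt hQd t x
  -- the space integrals of the transport term and of curl u vanish
  set QU1 : ℝ × Pt → ℝ := fun p => Q p * U1 p with hQU1def
  set QU2 : ℝ × Pt → ℝ := fun p => Q p * U2 p with hQU2def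
  have hQU1sm : ContDiff ℝ SM QU1 := hQsm.mul hU1
  have hQU2sm : ContDiff ℝ SM QU2 := hQsm.mul hU2
  have hODE : ∀ t, 0 ≤ t → HasDerivAt Fn (-(ν/α) * Fn t) t := by
    intro t ht
    have h := hFderiv t
    have heq : ∫ x in D.Ω, dd jt Q (t, x) = -(ν/α) * Fn t := by
      have hcong : Set.EqOn (fun x => dd jt Q (t,x))
          (fun x => (-(pd (1,0) (fun y => QU1 (t,y)) x + pd (0,1) (fun y => QU2 (t,y)) x))
            + ((ν/α) * (dd j1 U2 (t,x) - dd j2 U1 (t,x)) - (ν/α) * Q (t,x))) D.Ω := by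
        intro x hx
        have h1 : pd (1,0) (fun y => QU1 (t,y)) x = dd j1 QU1 (t,x) := by
          rw [pd_slice (hQU1sm.differentiable SM_ne_zero) (1,0) t]
        have h2 : pd (0,1) (fun y => QU2 (t,y)) x = dd j2 QU2 (t,x) := by
          rw [pd_slice (hQU2sm.differentiable SM_ne_zero) (0,1) t]
        have h3 : dd j1 QU1 = fun p => Q p * dd j1 U1 p + U1 p * dd j1 Q p := by
          rw [hQU1def]; exact dd_mul hQd hU1d j1
        have h4 : dd j2 QU2 = fun p => Q p * dd j2 U2 p + U2 p * dd j2 Q p := by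
          rw [hQU2def]; exact dd_mul hQd hU2d j2
        have hdivloc : dd j1 U1 (t,x) + dd j2 U2 (t,x) = 0 := by
          rw [← hdivb t x]; exact hdiv t x ht hx
        simp only
        rw [h1, h2, h3, h4]
        simp only
        rw [hpoint t x ht hx]
        linear_combination (Q (t,x)) * hdivloc
      rw [setIntegral_congr_fun hΩo.measurableSet hcong]
      -- integrability of the pieces
      have hcdiv : Continuous (fun p : ℝ × Pt =>
          -(dd j1 QU1 p + dd j2 QU2 p)) :=
        ((dd_cont hQU1sm j1).add (dd_cont hQU2sm j2)).neg
      have hccurl : Continuous (fun p : ℝ × Pt =>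
          (ν/α) * (dd j1 U2 p - dd j2 U1 p) - (ν/α) * Q p) :=
        (continuous_const.mul ((dd_cont hU2 j1).sub (dd_cont hU1 j2))).sub
          (continuous_const.mul hQcont)
      have hpdrw : (fun x : Pt =>
            (-(pd (1,0) (fun y => QU1 (t,y)) x + pd (0,1) (fun y => QU2 (t,y)) x))) =
          fun x => -(dd j1 QU1 (t,x) + dd j2 QU2 (t,x)) := by
        funext x
        rw [pd_slice (hQU1sm.differentiable SM_ne_zero) (1,0) t,
          pd_slice (hQU2sm.differentiable SM_ne_zero) (0,1) t]
      have hint1 : IntegrableOn (fun x : Pt =>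
          (-(pd (1,0) (fun y => QU1 (t,y)) x + pd (0,1) (fun y => QU2 (t,y)) x))) D.Ω := by
        rw [hpdrw]; exact intOn _ hcdiv t
      have hint2 : IntegrableOn (fun x : Pt =>
          (ν/α) * (dd j1 U2 (t,x) - dd j2 U1 (t,x)) - (ν/α) * Q (t,x)) D.Ω :=
        intOn _ hccurl t
      rw [integral_add hint1 hint2]
      -- first piece vanishes by the divergence lemma
      have hz1 : ∫ x in D.Ω,
          (-(pd (1,0) (fun y => QU1 (t,y)) x + pd (0,1) (fun y => QU2 (t,y)) x)) = 0 := by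
        have hu1z : ∀ x ∈ frontier D.Ω, U1 (t,x) = 0 := by
          intro x hx
          simp only [hU1def]
          rw [hbc t x ht hx]
          rfl
        have hu2z : ∀ x ∈ frontier D.Ω, U2 (t,x) = 0 := by
          intro x hx
          simp only [hU2def]
          rw [hbc t x ht hx]
          rfl
        have hfr1 : ∀ x ∈ frontier D.Ω, (fun y => QU1 (t,y)) x = 0 := by
          intro x hx
          show QU1 (t,x) = 0
          simp only [hQU1def]
          rw [hu1z x hx, mul_zero]
        have hfr2 : ∀ x ∈ frontier D.Ω, (fun y => QU2 (t,y)) x = 0 := by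
          intro x hx
          show QU2 (t,x) = 0
          simp only [hQU2def]
          rw [hu2z x hx, mul_zero]
        have hi1 : IntegrableOn (fun x : Pt => pd (1,0) (fun y => QU1 (t,y)) x) D.Ω := by
          have : (fun x : Pt => pd (1,0) (fun y => QU1 (t,y)) x)
              = fun x => dd j1 QU1 (t,x) := by
            funext x
            rw [pd_slice (hQU1sm.differentiable SM_ne_zero) (1,0) t]
          rw [this]; exact intOn _ (dd_cont hQU1sm j1) t
        have hi2 : IntegrableOn (fun x : Pt => pd (0,1) (fun y => QU2 (t,y)) x) D.Ω := by
          have : (fun x : Pt => pd (0,1) (fun y => QU2 (t,y)) x)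
              = fun x => dd j2 QU2 (t,x) := by
            funext x
            rw [pd_slice (hQU2sm.differentiable SM_ne_zero) (0,1) t]
          rw [this]; exact intOn _ (dd_cont hQU2sm j2) t
        rw [integral_neg, integral_add hi1 hi2,
          integral_pd1_zero hΩo hΩb (slice_contDiff hQU1sm t) hfr1,
          integral_pd2_zero hΩo hΩb (slice_contDiff hQU2sm t) hfr2]
        simp
      rw [hz1, zero_add]
      -- second piece
      have hint3 : IntegrableOn (fun x : Pt => dd j1 U2 (t,x) - dd j2 U1 (t,x)) D.Ω :=
        intOn _ ((dd_cont hU2 j1).sub (dd_cont hU1 j2)) t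
      have hint4 : IntegrableOn (fun x : Pt => Q (t,x)) D.Ω := intOn _ hQcont t
      rw [integral_sub (hint3.const_mul _) (hint4.const_mul _),
        integral_const_mul, integral_const_mul]
      have hz2 : ∫ x in D.Ω, (dd j1 U2 (t,x) - dd j2 U1 (t,x)) = 0 := by
        have hcu : (fun x : Pt => dd j1 U2 (t,x) - dd j2 U1 (t,x))
            = fun x => pd (1,0) (fun y => U2 (t,y)) x - pd (0,1) (fun y => U1 (t,y)) x := by
          funext x
          rw [pd_slice hU2d (1,0) t, pd_slice hU1d (0,1) t]
        have hiu1 : IntegrableOn (fun x : Pt => pd (1,0) (fun y => U2 (t,y)) x) D.Ω := by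
          have : (fun x : Pt => pd (1,0) (fun y => U2 (t,y)) x) = fun x => dd j1 U2 (t,x) := by
            funext x
            rw [pd_slice hU2d (1,0) t]
          rw [this]; exact intOn _ (dd_cont hU2 j1) t
        have hiu2 : IntegrableOn (fun x : Pt => pd (0,1) (fun y => U1 (t,y)) x) D.Ω := by
          have : (fun x : Pt => pd (0,1) (fun y => U1 (t,y)) x) = fun x => dd j2 U1 (t,x) := by
            funext x
            rw [pd_slice hU1d (0,1) t]
          rw [this]; exact intOn _ (dd_cont hU1 j2) t
        have hfru2 : ∀ x ∈ frontier D.Ω, (fun y => U2 (t,y)) x = 0 := by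
          intro x hx
          show U2 (t,x) = 0
          simp only [hU2def]
          rw [hbc t x ht hx]
          rfl
        have hfru1 : ∀ x ∈ frontier D.Ω, (fun y => U1 (t,y)) x = 0 := by
          intro x hx
          show U1 (t,x) = 0
          simp only [hU1def]
          rw [hbc t x ht hx]
          rfl
        rw [hcu, integral_sub hiu1 hiu2,
          integral_pd1_zero hΩo hΩb (slice_contDiff hU2 t) hfru2,
          integral_pd2_zero hΩo hΩb (slice_contDiff hU1 t) hfru1, sub_zero]
      rw [hz2, mul_zero, zero_sub]
      simp only [hFndef]
      ring
    rw [heq] at h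
    exact h
  -- solve the ODE
  intro t ht
  have key : ∀ s ∈ Icc (0:ℝ) t, Real.exp ((ν/α) * s) * Fn s = Real.exp ((ν/α) * 0) * Fn 0 := by
    apply constant_of_has_deriv_right_zero (f := fun s => Real.exp ((ν/α) * s) * Fn s)
    · have hFc : Continuous Fn := by
        have hFd : Differentiable ℝ Fn := fun s => (hFderiv s).differentiableAt
        exact hFd.continuous
      exact ((Real.continuous_exp.comp (continuous_const.mul continuous_id)).mul hFc).continuousOn
    · intro s hs
      have h1 : HasDerivAt (fun s : ℝ => Real.exp ((ν/α) * s)) ((ν/α) * Real.exp ((ν/α) * s)) s := by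
        have h0 : HasDerivAt (fun s : ℝ => (ν/α) * s) (ν/α) s := by
          have h0' := hasDerivAt_mul_const (𝕜 := ℝ) (x := s) ((ν/α) : ℝ)
          have heqf : (fun s : ℝ => (ν/α) * s) = fun s : ℝ => s * (ν/α) := by
            funext s; ring
          rw [heqf]; exact h0'
        have h1' := h0.exp
        rw [mul_comm] at h1'
        exact h1'
      have h2 := hODE s hs.1
      have h3 := h1.mul h2
      have h4 : (ν/α) * Real.exp ((ν/α) * s) * Fn s
          + Real.exp ((ν/α) * s) * (-(ν/α) * Fn s) = 0 := by ring
      rw [h4] at h3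
      exact h3.hasDerivWithinAt
  have hkey := key t ⟨ht, le_refl t⟩
  rw [mul_zero, Real.exp_zero, one_mul] at hkey
  have hexp_pos : (0:ℝ) < Real.exp ((ν/α) * t) := Real.exp_pos _
  have hFt : Fn t = Real.exp (-(ν * t) / α) * Fn 0 := by
    have hneg : -(ν * t) / α = -((ν/α) * t) := by field_simp
    rw [hneg, Real.exp_neg]
    have hne : Real.exp ((ν/α) * t) ≠ 0 := (Real.exp_pos _).ne'
    rw [← hkey, ← mul_assoc, inv_mul_cancel₀ hne, one_mul]
  have hrw : ∀ s : ℝ, ∫ x in D.Ω, curl2 (vfield α (u s)) x = Fn s := by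
    intro s
    rw [hFndef]
    exact integral_congr_ae (Eventually.of_forall fun x => hqb s x)
  rw [hrw t, hrw 0, hFt]
end
end
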